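/- arXiv:1902.07976 — 11 statements merged into one kernel-verified Lean document; each statement's English description precedes it below -/
import Mathlib

section
/- The map f(x1,x2) = (2x1 a1/(a1+x1+γx2), 2x2 a2/(a2+γx1+x2)) on the nonnegative quadrant has exactly four fixed points: (0,0), (a1,0), (0,a2), and ((a1-γa2)/(1-γ²), (a2-γa1)/(1-γ²)). -/
/-- The bare bones map has exactly four fixed points in the nonnegative quadrant. -/
theorem fixed_points_of_bare_bones_map
    (a1 a2 γ : ℝ) (ha1 : 0 < a1) (ha2 : 0 < a2) (hγ0 : 0 < γ) (hγ1 : γ < 1)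
    (hc1 : a1 - γ * a2 > 0) (hc2 : a2 - γ * a1 > 0)
    (f : ℝ × ℝ → ℝ × ℝ)
    (hf : ∀ x : ℝ × ℝ,
      f x = (2 * x.1 * a1 / (a1 + x.1 + γ * x.2),
             2 * x.2 * a2 / (a2 + γ * x.1 + x.2))) :
    {x : ℝ × ℝ | 0 ≤ x.1 ∧ 0 ≤ x.2 ∧ f x = x} =
      {((0 : ℝ), (0 : ℝ)), (a1, 0), (0, a2),
        ((a1 - γ * a2) / (1 - γ ^ 2), (a2 - γ * a1) / (1 - γ ^ 2))} := by
  have hg2 : (0:ℝ) < 1 - γ ^ 2 := by nlinarith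
  ext ⟨x1, x2⟩
  simp only [Set.mem_setOf_eq, Set.mem_insert_iff, Set.mem_singleton_iff, hf,
    Prod.mk.injEq, Prod.ext_iff]
  constructor
  · rintro ⟨h1, h2, e1, e2⟩
    have d1 : (0:ℝ) < a1 + x1 + γ * x2 := by nlinarith
    have d2 : (0:ℝ) < a2 + γ * x1 + x2 := by nlinarith
    have e1' : x1 * (x1 + γ * x2 - a1) = 0 := by
      have := e1
      field_simp at this
      nlinarith [this]
    have e2' : x2 * (γ * x1 + x2 - a2) = 0 := by
      have := e2
      field_simp at this
      nlinarith [this]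
    rcases mul_eq_zero.1 e1' with h1' | h1' <;>
      rcases mul_eq_zero.1 e2' with h2' | h2'
    · exact Or.inl ⟨h1', h2'⟩
    · exact Or.inr (Or.inr (Or.inl ⟨h1', by linear_combination h2' - γ * h1'⟩))
    · exact Or.inr (Or.inl ⟨by linear_combination h1' - γ * h2', h2'⟩)
    · refine Or.inr (Or.inr (Or.inr ⟨?_, ?_⟩)) <;>
        · field_simp
          ring_nf
          ring_nf at h1' h2'
          nlinarith [h1', h2']
  · intro h
    rcases h with ⟨hx1, hx2⟩ | ⟨hx1, hx2⟩ | ⟨hx1, hx2⟩ | ⟨hx1, hx2⟩ <;>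
      subst hx1 <;> subst hx2
    · refine ⟨le_refl 0, le_refl 0, ?_, ?_⟩ <;> simp
    · refine ⟨le_of_lt ha1, le_refl 0, ?_, ?_⟩ <;> field_simp <;> ring
    · refine ⟨le_refl 0, le_of_lt ha2, ?_, ?_⟩ <;> field_simp <;> ring
    · have h1 : (0:ℝ) ≤ (a1 - γ * a2) / (1 - γ ^ 2) := by positivity
      have h2 : (0:ℝ) ≤ (a2 - γ * a1) / (1 - γ ^ 2) := by positivity
      have d1 : a1 + (a1 - γ * a2) / (1 - γ ^ 2) + γ * ((a2 - γ * a1) / (1 - γ ^ 2)) ≠ 0 := by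
        positivity
      have d2 : a2 + γ * ((a1 - γ * a2) / (1 - γ ^ 2)) + (a2 - γ * a1) / (1 - γ ^ 2) ≠ 0 := by
        positivity
      refine ⟨h1, h2, ?_, ?_⟩ <;>
        · rw [div_eq_iff ?_]
          · field_simp
            ring
          · assumption
end

section
/- The set E~ = [x1co, ∞) × [0, x2co] is forward invariant under f, where (x1co, x2co) = ((a1-γa2)/(1-γ²), (a2-γa1)/(1-γ²)): if x ∈ E~ then f(x) ∈ E~. -/
/-- The set `E~ = [x1co, ∞) × [0, x2co]` is forward invariant under the bare bones map. -/
theorem forward_invariance_of_Etilde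
    (a1 a2 γ : ℝ) (ha1 : 0 < a1) (ha2 : 0 < a2) (hγ0 : 0 < γ) (hγ1 : γ < 1)
    (hc1 : a1 - γ * a2 > 0) (hc2 : a2 - γ * a1 > 0)
    (f : ℝ × ℝ → ℝ × ℝ)
    (hf : ∀ x : ℝ × ℝ,
      f x = (2 * x.1 * a1 / (a1 + x.1 + γ * x.2),
             2 * x.2 * a2 / (a2 + γ * x.1 + x.2)))
    (x1co x2co : ℝ)
    (h1 : x1co = (a1 - γ * a2) / (1 - γ ^ 2))
    (h2 : x2co = (a2 - γ * a1) / (1 - γ ^ 2)) :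
    Set.MapsTo f (Set.Ici x1co ×ˢ Set.Icc (0 : ℝ) x2co)
      (Set.Ici x1co ×ˢ Set.Icc (0 : ℝ) x2co) := by
  have hγ2 : (0:ℝ) < 1 - γ ^ 2 := by nlinarith
  have hx1co : 0 < x1co := by rw [h1]; positivity
  have hx2co : 0 < x2co := by rw [h2]; positivity
  have hid1 : x1co + γ * x2co = a1 := by
    rw [h1, h2]; field_simp; ring
  have hid2 : γ * x1co + x2co = a2 := by
    rw [h1, h2]; field_simp; ring
  rintro ⟨x1, x2⟩ ⟨hxa, hxb, hxc⟩
  simp only [Set.mem_Ici] at hxa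
  simp only [Set.mem_Icc] at hxb hxc ⊢
  rw [hf]
  have hd1 : 0 < a1 + x1 + γ * x2 := by nlinarith
  have hd2 : 0 < a2 + γ * x1 + x2 := by nlinarith
  have hle1 : x1co ≤ a1 := by nlinarith
  have hle2 : x2co ≤ a2 := by nlinarith
  have hid1' : x1co * (x1co + γ * x2co) = x1co * a1 := by rw [hid1]
  have hid2' : x2co * (γ * x1co + x2co) = x2co * a2 := by rw [hid2]
  refine ⟨?_, ?_, ?_⟩
  · simp only [Set.mem_Ici]
    rw [le_div_iff₀ hd1]
    have h3 : (x1 - x1co) * (2 * a1 - x1co) ≥ 0 := by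
      apply mul_nonneg <;> linarith
    have h4 : γ * x1co * (x2co - x2) ≥ 0 := by
      apply mul_nonneg
      · positivity
      · linarith
    nlinarith [h3, h4, hid1']
  · positivity
  · rw [div_le_iff₀ hd2]
    have h3 : (x2co - x2) * (2 * a2 - x2co) ≥ 0 := by
      apply mul_nonneg <;> linarith
    have h4 : γ * x2co * (x1 - x1co) ≥ 0 := by
      apply mul_nonneg
      · positivity
      · linarith
    nlinarith [h3, h4, hid2']
end

section
/- For every x in E~ = [x1co, ∞) × [0, x2co], f1(x) ≥ x1co and f2(x) ≤ x2co. -/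
/-- For every `x ∈ E~ = [x1co, ∞) × [0, x2co]`, `f1(x) ≥ x1co` and `f2(x) ≤ x2co`. -/
theorem coordinatewise_bounds_on_Etilde
    (a1 a2 γ : ℝ) (ha1 : 0 < a1) (ha2 : 0 < a2) (hγ0 : 0 < γ) (hγ1 : γ < 1)
    (hc1 : a1 - γ * a2 > 0) (hc2 : a2 - γ * a1 > 0)
    (f1 f2 : ℝ × ℝ → ℝ)
    (hf1 : ∀ x : ℝ × ℝ, f1 x = 2 * x.1 * a1 / (a1 + x.1 + γ * x.2))
    (hf2 : ∀ x : ℝ × ℝ, f2 x = 2 * x.2 * a2 / (a2 + γ * x.1 + x.2))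
    (x1co x2co : ℝ)
    (h1 : x1co = (a1 - γ * a2) / (1 - γ ^ 2))
    (h2 : x2co = (a2 - γ * a1) / (1 - γ ^ 2)) :
    ∀ x : ℝ × ℝ, x ∈ Set.Ici x1co ×ˢ Set.Icc (0 : ℝ) x2co →
      x1co ≤ f1 x ∧ f2 x ≤ x2co := by
  have hγ2 : (0:ℝ) < 1 - γ ^ 2 := by nlinarith
  have hx1co : 0 < x1co := by rw [h1]; positivity
  have hx2co : 0 < x2co := by rw [h2]; positivity
  have ha1eq : a1 = x1co + γ * x2co := by
    rw [h1, h2]; field_simp; ring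
  have ha2eq : a2 = γ * x1co + x2co := by
    rw [h1, h2]; field_simp; ring
  intro x hx
  have hx1' : x1co ≤ x.1 := hx.1
  have hx2a : (0:ℝ) ≤ x.2 := hx.2.1
  have hx2b : x.2 ≤ x2co := hx.2.2
  have hd1 : 0 < a1 + x.1 + γ * x.2 := by nlinarith
  have hd2 : 0 < a2 + γ * x.1 + x.2 := by nlinarith
  constructor
  · rw [hf1, le_div_iff₀ hd1]
    nlinarith [mul_nonneg (sub_nonneg.mpr hx1') (by nlinarith : (0:ℝ) ≤ 2*a1 - x1co),
      mul_nonneg (mul_nonneg hx1co.le hγ0.le) (sub_nonneg.mpr hx2b)]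
  · rw [hf2, div_le_iff₀ hd2]
    nlinarith [mul_nonneg (sub_nonneg.mpr hx2b) (by nlinarith : (0:ℝ) ≤ 2*a2 - x2co),
      mul_nonneg (mul_nonneg hx2co.le hγ0.le) (sub_nonneg.mpr hx1')]
end

section
/- Let ρ > 1 and C ≥ 0, and for x > 0, n ∈ ℕ, define the sequence x_{0,n} = x/ρⁿ and x_{m,n} = ρ x_{m-1,n}(1 + C x_{m-1,n}) for m = 1,…,n. Then there exists a finite function ψ : ℝ₊ → ℝ₊ such that x_{m,n} ≤ ψ(x) ρ^{m-n} for all n and all m = 1,…,n. -/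
/-- For the quadratic recursion `x_{m,n} = ρ x_{m-1,n}(1 + C x_{m-1,n})`,
`x_{0,n} = x/ρⁿ`, there is a finite function `ψ` with
`x_{m,n} ≤ ψ(x) ρ^{m-n}` for all `n` and `m = 1,…,n`. -/
theorem quadratic_recursion_bound
    (ρ C : ℝ) (hρ : 1 < ρ) (hC : 0 ≤ C)
    (X : ℝ → ℕ → ℕ → ℝ)
    (hX0 : ∀ x n, X x n 0 = x / ρ ^ n)
    (hXrec : ∀ x n m, X x n (m + 1) = ρ * X x n m * (1 + C * X x n m)) :
    ∃ ψ : ℝ → ℝ, (∀ x, 0 ≤ x → 0 ≤ ψ x) ∧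
      ∀ x, 0 < x → ∀ n m : ℕ, 1 ≤ m → m ≤ n →
        X x n m ≤ ψ x * ρ ^ ((m : ℤ) - (n : ℤ)) := by
  have hρ0 : (0:ℝ) < ρ := lt_trans one_pos hρ
  have hρ1 : (0:ℝ) < ρ - 1 := by linarith
  have hlog2 : (0:ℝ) < Real.log 2 := Real.log_pos (by norm_num)
  -- nonnegativity of X on nonneg starting values
  have hnn : ∀ x : ℝ, 0 ≤ x → ∀ n m, 0 ≤ X x n m := by
    intro x hx n m
    induction m with
    | zero => rw [hX0]; positivity
    | succ m ih =>
      rw [hXrec]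
      have h1 : (0:ℝ) ≤ 1 + C * X x n m := by
        have := mul_nonneg hC ih
        linarith
      exact mul_nonneg (mul_nonneg hρ0.le ih) h1
  -- one-step monotonicity of the map u ↦ ρ u (1 + C u)
  have gmono : ∀ u v : ℝ, 0 ≤ u → u ≤ v → ρ * u * (1 + C * u) ≤ ρ * v * (1 + C * v) := by
    intro u v hu huv
    have hv : 0 ≤ v := hu.trans huv
    have h2 : C * u ≤ C * v := mul_le_mul_of_nonneg_left huv hC
    have h3 : (0:ℝ) ≤ 1 + C * u := by
      have := mul_nonneg hC hu
      linarith
    exact mul_le_mul (mul_le_mul_of_nonneg_left huv hρ0.le) (by linarith) h3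
      (mul_nonneg hρ0.le hv)
  -- monotonicity in the starting value (at n = 0)
  have hmono : ∀ a b : ℝ, 0 ≤ a → a ≤ b → ∀ j, X a 0 j ≤ X b 0 j := by
    intro a b ha hab j
    induction j with
    | zero => rw [hX0, hX0]; simpa using hab
    | succ j ih =>
      rw [hXrec, hXrec]
      exact gmono _ _ (hnn a ha 0 j) ih
  -- monotonicity in the index (at n = 0)
  have hstep : ∀ b : ℝ, 0 ≤ b → ∀ j, X b 0 j ≤ X b 0 (j + 1) := by
    intro b hb j
    rw [hXrec]
    have hu : 0 ≤ X b 0 j := hnn b hb 0 j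
    nlinarith [mul_nonneg hu hρ1.le, mul_nonneg (mul_nonneg hρ0.le hC) (mul_nonneg hu hu)]
  have hidx : ∀ b : ℝ, 0 ≤ b → ∀ j J : ℕ, j ≤ J → X b 0 j ≤ X b 0 J := by
    intro b hb j J hjJ
    induction J with
    | zero => simp_all
    | succ J ih =>
      rcases Nat.lt_or_ge j (J + 1) with h | h
      · exact le_trans (ih (Nat.lt_succ_iff.mp h)) (hstep b hb J)
      · have : j = J + 1 := le_antisymm hjJ h
        simp [this]
  -- shift comparison: if X x n m₀ ≤ 2x then X x n (m₀ + j) ≤ X (2x) 0 j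
  have hshift : ∀ x : ℝ, 0 < x → ∀ n m₀ : ℕ, X x n m₀ ≤ 2 * x →
      ∀ j : ℕ, X x n (m₀ + j) ≤ X (2 * x) 0 j := by
    intro x hx n m₀ h0 j
    induction j with
    | zero =>
      rw [hX0]
      simpa using h0
    | succ j ih =>
      have : m₀ + (j + 1) = (m₀ + j) + 1 := by ring
      rw [this, hXrec, hXrec]
      exact gmono _ _ (hnn x hx.le n (m₀ + j)) ih
  -- choose J(x)
  have hexJ : ∀ x : ℝ, ∃ J : ℕ, 2 * C * x / (ρ - 1) ≤ ρ ^ J * Real.log 2 := by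
    intro x
    obtain ⟨J, hJ⟩ := pow_unbounded_of_one_lt ((2 * C * x / (ρ - 1)) / Real.log 2) hρ
    exact ⟨J, ((div_lt_iff₀ hlog2).mp hJ).le⟩
  choose J hJ using hexJ
  -- phase 1 bound: for m + J x ≤ n, X x n m ≤ 2 x ρ^m / ρ^n
  have phase1 : ∀ x : ℝ, 0 < x → ∀ n m : ℕ, m + J x ≤ n →
      X x n m ≤ 2 * x * ρ ^ m / ρ ^ n := by
    intro x hx n m hmn
    set q : ℕ → ℝ := fun m => ∏ k ∈ Finset.range m, (1 + 2 * C * x * ρ ^ k / ρ ^ n) with hq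
    have hqpos : ∀ m, 0 < q m := by
      intro m
      apply Finset.prod_pos
      intro k _
      positivity
    have hqle : ∀ m, m + J x ≤ n → q m ≤ 2 := by
      intro m hm
      have h1 : q m ≤ Real.exp (∑ k ∈ Finset.range m, 2 * C * x * ρ ^ k / ρ ^ n) := by
        rw [Real.exp_sum]
        apply Finset.prod_le_prod
        · intro k _; positivity
        · intro k _
          have := Real.add_one_le_exp (2 * C * x * ρ ^ k / ρ ^ n)
          linarith
      have hsum : (∑ k ∈ Finset.range m, 2 * C * x * ρ ^ k / ρ ^ n) ≤ Real.log 2 := by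
        have hgeom : (∑ k ∈ Finset.range m, ρ ^ k) = (ρ ^ m - 1) / (ρ - 1) :=
          geom_sum_eq (by linarith) m
        have heq : (∑ k ∈ Finset.range m, 2 * C * x * ρ ^ k / ρ ^ n)
            = (2 * C * x / ρ ^ n) * ((ρ ^ m - 1) / (ρ - 1)) := by
          rw [← hgeom, Finset.mul_sum]
          apply Finset.sum_congr rfl
          intro k _
          ring
        rw [heq]
        -- (2Cx/ρ^n) * (ρ^m - 1)/(ρ-1) ≤ 2Cx ρ^m /(ρ^n (ρ-1)) ≤ log 2
        have hρm : ρ ^ m * ρ ^ (J x) ≤ ρ ^ n := by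
          calc ρ ^ m * ρ ^ (J x) = ρ ^ (m + J x) := (pow_add ρ m (J x)).symm
          _ ≤ ρ ^ n := pow_le_pow_right₀ hρ.le hm
        have hJx := hJ x
        have hρnpos : (0:ℝ) < ρ ^ n := pow_pos hρ0 n
        have hρJpos : (0:ℝ) < ρ ^ (J x) := pow_pos hρ0 (J x)
        have hCx : 0 ≤ 2 * C * x := by positivity
        rw [div_le_iff₀ hρ1] at hJx
        -- goal : (2Cx/ρ^n) * ((ρ^m-1)/(ρ-1)) ≤ log 2
        rw [div_mul_div_comm, div_le_iff₀ (by positivity)]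
        -- 2Cx * (ρ^m - 1) ≤ log 2 * (ρ^n * (ρ-1))
        have hρmpos : (0:ℝ) < ρ ^ m := pow_pos hρ0 m
        have h3 : 2 * C * x * ρ ^ m ≤ ρ ^ (J x) * Real.log 2 * (ρ - 1) * ρ ^ m :=
          mul_le_mul_of_nonneg_right hJx hρmpos.le
        have h4 : Real.log 2 * (ρ - 1) * (ρ ^ m * ρ ^ (J x)) ≤
            Real.log 2 * (ρ - 1) * ρ ^ n :=
          mul_le_mul_of_nonneg_left hρm (mul_nonneg hlog2.le hρ1.le)
        nlinarith
      calc q m ≤ Real.exp (∑ k ∈ Finset.range m, 2 * C * x * ρ ^ k / ρ ^ n) := h1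
      _ ≤ Real.exp (Real.log 2) := Real.exp_le_exp.mpr hsum
      _ = 2 := Real.exp_log (by norm_num)
    -- induction: X x n m ≤ x ρ^m/ρ^n * q m
    have hXq : ∀ m, m + J x ≤ n → X x n m ≤ x * ρ ^ m / ρ ^ n * q m := by
      intro m hm
      induction m with
      | zero =>
        rw [hX0]
        simp [hq]
      | succ m ih =>
        have hm' : m + J x ≤ n := by omega
        have ih' := ih hm'
        have hXm2 : X x n m ≤ 2 * x * ρ ^ m / ρ ^ n := by
          have := hqle m hm'
          have hpos : (0:ℝ) ≤ x * ρ ^ m / ρ ^ n := by positivity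
          calc X x n m ≤ x * ρ ^ m / ρ ^ n * q m := ih'
          _ ≤ x * ρ ^ m / ρ ^ n * 2 := mul_le_mul_of_nonneg_left this hpos
          _ = 2 * x * ρ ^ m / ρ ^ n := by ring
        rw [hXrec]
        have hqsucc : q (m + 1) = q m * (1 + 2 * C * x * ρ ^ m / ρ ^ n) := by
          rw [hq]
          exact Finset.prod_range_succ _ m
        have hu : 0 ≤ X x n m := hnn x hx.le n m
        have hfac : 1 + C * X x n m ≤ 1 + 2 * C * x * ρ ^ m / ρ ^ n := by
          have h := mul_le_mul_of_nonneg_left hXm2 hC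
          have heq : C * (2 * x * ρ ^ m / ρ ^ n) = 2 * C * x * ρ ^ m / ρ ^ n := by ring
          linarith
        have hfacpos : (0:ℝ) < 1 + C * X x n m := by
          have := mul_nonneg hC hu
          linarith
        calc ρ * X x n m * (1 + C * X x n m)
            ≤ ρ * (x * ρ ^ m / ρ ^ n * q m) * (1 + 2 * C * x * ρ ^ m / ρ ^ n) := by
              have h1 : ρ * X x n m ≤ ρ * (x * ρ ^ m / ρ ^ n * q m) :=
                mul_le_mul_of_nonneg_left ih' hρ0.le
              have h2 : (0:ℝ) ≤ ρ * (x * ρ ^ m / ρ ^ n * q m) := by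
                have hq0 := (hqpos m).le
                positivity
              exact mul_le_mul h1 hfac hfacpos.le h2
        _ = x * ρ ^ (m + 1) / ρ ^ n * q (m + 1) := by
              rw [hqsucc, pow_succ]
              ring
    have := hXq m hmn
    have := hqle m hmn
    have hpos : (0:ℝ) ≤ x * ρ ^ m / ρ ^ n := by positivity
    calc X x n m ≤ x * ρ ^ m / ρ ^ n * q m := hXq m hmn
    _ ≤ x * ρ ^ m / ρ ^ n * 2 := mul_le_mul_of_nonneg_left (hqle m hmn) hpos
    _ = 2 * x * ρ ^ m / ρ ^ n := by ring
  -- define ψ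
  refine ⟨fun x => ρ ^ (J x) * X (2 * x) 0 (J x), ?_, ?_⟩
  · intro x hx
    have := hnn (2 * x) (by linarith) 0 (J x)
    positivity
  · intro x hx n m hm1 hmn
    have h2x : (0:ℝ) ≤ 2 * x := by linarith
    have hX2x0 : X (2 * x) 0 0 = 2 * x := by rw [hX0]; simp
    have hψ2x : 2 * x ≤ X (2 * x) 0 (J x) := by
      have := hidx (2 * x) h2x 0 (J x) (Nat.zero_le _)
      rwa [hX2x0] at this
    have hρJ1 : (1:ℝ) ≤ ρ ^ (J x) := one_le_pow₀ hρ.le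
    have hzpow : ρ ^ ((m : ℤ) - (n : ℤ)) = ρ ^ m / ρ ^ n := by
      rw [zpow_sub₀ (ne_of_gt hρ0), zpow_natCast, zpow_natCast]
    rw [hzpow]
    rcases le_or_gt (m + J x) n with hc | hc
    · -- phase 1 regime
      have h1 := phase1 x hx n m hc
      have hψx : 2 * x ≤ ρ ^ (J x) * X (2 * x) 0 (J x) := by
        calc 2 * x = 1 * (2 * x) := (one_mul _).symm
        _ ≤ ρ ^ (J x) * X (2 * x) 0 (J x) :=
          mul_le_mul hρJ1 hψ2x (by linarith) (by positivity)
      have hpos : (0:ℝ) ≤ ρ ^ m / ρ ^ n := by positivity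
      calc X x n m ≤ 2 * x * ρ ^ m / ρ ^ n := h1
      _ = 2 * x * (ρ ^ m / ρ ^ n) := by ring
      _ ≤ ρ ^ (J x) * X (2 * x) 0 (J x) * (ρ ^ m / ρ ^ n) :=
        mul_le_mul_of_nonneg_right hψx hpos
    · -- phase 2 regime: n < m + J x
      -- choose m₀
      obtain ⟨m₀, hm₀n, hstart, hjJ⟩ :
          ∃ m₀ : ℕ, m₀ ≤ m ∧ X x n m₀ ≤ 2 * x ∧ m - m₀ ≤ J x := by
        rcases le_or_gt n (J x) with hn | hn
        · refine ⟨0, Nat.zero_le _, ?_, by omega⟩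
          rw [hX0]
          have h1 : (1:ℝ) ≤ ρ ^ n := one_le_pow₀ hρ.le
          rw [div_le_iff₀ (by positivity)]
          nlinarith [mul_nonneg hx.le (sub_nonneg.mpr h1)]
        · refine ⟨n - J x, by omega, ?_, by omega⟩
          have hp := phase1 x hx n (n - J x) (by omega)
          have hle : ρ ^ (n - J x) ≤ ρ ^ n := pow_le_pow_right₀ hρ.le (by omega)
          have hρn : (0:ℝ) < ρ ^ n := pow_pos hρ0 n
          calc X x n (n - J x) ≤ 2 * x * ρ ^ (n - J x) / ρ ^ n := hp
          _ ≤ 2 * x := by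
              rw [div_le_iff₀ hρn]
              have := mul_le_mul_of_nonneg_left hle (by linarith : (0:ℝ) ≤ 2 * x)
              linarith
      have hX2 : X x n m ≤ X (2 * x) 0 (J x) := by
        have := hshift x hx n m₀ hstart (m - m₀)
        rw [Nat.add_sub_cancel' hm₀n] at this
        exact le_trans this (hidx (2 * x) h2x (m - m₀) (J x) hjJ)
      -- ρ^(J x) * (ρ^m / ρ^n) ≥ 1 since J x + m ≥ n + 1
      have hpow1 : (1:ℝ) ≤ ρ ^ (J x) * (ρ ^ m / ρ ^ n) := by
        have h1 : ρ ^ n ≤ ρ ^ (J x) * ρ ^ m := by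
          rw [← pow_add]
          exact pow_le_pow_right₀ hρ.le (by omega)
        have hρn : (0:ℝ) < ρ ^ n := pow_pos hρ0 n
        rw [← mul_div_assoc, le_div_iff₀ hρn, one_mul]
        exact h1
      have hXpos : 0 < X (2 * x) 0 (J x) := lt_of_lt_of_le (by linarith) hψ2x
      calc X x n m ≤ X (2 * x) 0 (J x) := hX2
      _ = 1 * X (2 * x) 0 (J x) := (one_mul _).symm
      _ ≤ (ρ ^ (J x) * (ρ ^ m / ρ ^ n)) * X (2 * x) 0 (J x) :=
        mul_le_mul_of_nonneg_right hpow1 hXpos.le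
      _ = ρ ^ (J x) * X (2 * x) 0 (J x) * (ρ ^ m / ρ ^ n) := by ring
end

section
/- Let ρ > 1, s = 1/ρ, and p(x) = ρx(1+x) with inverse branch f(x) = √(1/4 + sx) − 1/2 on [0,∞). Then the limit φ(x) = lim_{n→∞} fⁿ(x)/sⁿ exists for every x ≥ 0, is finite and positive on (0,∞), satisfies the Schröder equation φ(f(x)) = s φ(x), and φ'(0+) = 1. -/
open Filter Topology

/-- Existence of the Schröder function for `f(x) = √(1/4 + sx) − 1/2`, `s = 1/ρ`:
the limit `φ(x) = lim fⁿ(x)/sⁿ` exists for `x ≥ 0`, is positive on `(0,∞)`,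
solves `φ(f(x)) = s φ(x)` and has right derivative `1` at `0`. -/
theorem schroder_function_exists
    (ρ : ℝ) (hρ : 1 < ρ) (s : ℝ) (hs : s = 1 / ρ)
    (f : ℝ → ℝ) (hf : ∀ x : ℝ, f x = Real.sqrt (1 / 4 + s * x) - 1 / 2) :
    ∃ φ : ℝ → ℝ,
      (∀ x : ℝ, 0 ≤ x →
        Tendsto (fun n : ℕ => f^[n] x / s ^ n) atTop (𝓝 (φ x))) ∧
      (∀ x : ℝ, 0 < x → 0 < φ x) ∧
      (∀ x : ℝ, 0 ≤ x → φ (f x) = s * φ x) ∧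
      HasDerivWithinAt φ 1 (Set.Ici 0) 0 := by
  have hρ0 : (0:ℝ) < ρ := lt_trans one_pos hρ
  have hs0 : 0 < s := by rw [hs]; positivity
  have hs1 : s < 1 := by rw [hs]; exact (div_lt_one hρ0).mpr hρ
  have h1s : (0:ℝ) < 1 - s := by linarith
  -- basic facts about f on [0, ∞)
  have hfx : ∀ x : ℝ, 0 ≤ x → 0 ≤ f x ∧ f x ≤ s * x ∧ f x * (1 + f x) = s * x := by
    intro x hx
    have hsx : 0 ≤ s * x := by positivity
    have h1 : (0:ℝ) ≤ 1/4 + s * x := by linarith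
    have ht0 : 0 ≤ Real.sqrt (1/4 + s*x) := Real.sqrt_nonneg _
    have ht2 : Real.sqrt (1/4 + s*x) ^ 2 = 1/4 + s*x := Real.sq_sqrt h1
    refine ⟨by rw [hf]; nlinarith, by rw [hf]; nlinarith [sq_nonneg (s*x)],
      by rw [hf]; nlinarith⟩
  have hf0 : f 0 = 0 := by
    have h1 := (hfx 0 le_rfl).1
    have h2 := (hfx 0 le_rfl).2.1
    simp only [mul_zero] at h2
    linarith
  -- lower bound for f
  have hflow : ∀ x : ℝ, 0 ≤ x → s * x * Real.exp (-x) ≤ f x := by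
    intro x hx
    obtain ⟨h0, h1, h2⟩ := hfx x hx
    have h5 : s * x ≤ f x * Real.exp x := by
      have he : x + 1 ≤ Real.exp x := Real.add_one_le_exp x
      have hx1 : f x ≤ x := h1.trans (by nlinarith)
      nlinarith [mul_le_mul_of_nonneg_left he h0, mul_le_mul_of_nonneg_left hx1 h0]
    calc s * x * Real.exp (-x) ≤ f x * Real.exp x * Real.exp (-x) :=
          mul_le_mul_of_nonneg_right h5 (Real.exp_nonneg _)
      _ = f x := by rw [mul_assoc, ← Real.exp_add]; simp
  -- iterates
  have hit : ∀ x : ℝ, 0 ≤ x → ∀ n : ℕ, 0 ≤ f^[n] x ∧ f^[n] x ≤ s ^ n * x := by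
    intro x hx n
    induction n with
    | zero => simpa using hx
    | succ n ih =>
      obtain ⟨h0, h1⟩ := ih
      obtain ⟨g0, g1, _⟩ := hfx _ h0
      rw [Function.iterate_succ_apply']
      constructor
      · exact g0
      · have hsn : (0:ℝ) ≤ s ^ n := le_of_lt (pow_pos hs0 n)
        calc f (f^[n] x) ≤ s * f^[n] x := g1
          _ ≤ s * (s ^ n * x) := by nlinarith
          _ = s ^ (n+1) * x := by ring
  -- antitone
  have hanti : ∀ x : ℝ, 0 ≤ x → ∀ n : ℕ,
      f^[n+1] x / s ^ (n+1) ≤ f^[n] x / s ^ n := by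
    intro x hx n
    obtain ⟨h0, _⟩ := hit x hx n
    obtain ⟨_, g1, _⟩ := hfx _ h0
    rw [Function.iterate_succ_apply', div_le_div_iff₀ (pow_pos hs0 _) (pow_pos hs0 _)]
    have hsn : (0:ℝ) < s ^ n := pow_pos hs0 n
    calc f (f^[n] x) * s ^ n ≤ s * f^[n] x * s ^ n := by nlinarith
      _ = f^[n] x * s ^ (n+1) := by ring
  -- lower bound for iterates
  have hlown : ∀ x : ℝ, 0 ≤ x → ∀ n : ℕ,
      x * Real.exp (-(x * ((1 - s ^ n) / (1 - s)))) ≤ f^[n] x / s ^ n := by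
    intro x hx n
    induction n with
    | zero => simp
    | succ n ih =>
      obtain ⟨h0, h1⟩ := hit x hx n
      have key : s * f^[n] x * Real.exp (-(x * s ^ n)) ≤ f^[n+1] x := by
        rw [Function.iterate_succ_apply']
        calc s * f^[n] x * Real.exp (-(x * s ^ n))
            ≤ s * f^[n] x * Real.exp (-(f^[n] x)) := by
              apply mul_le_mul_of_nonneg_left _ (by positivity)
              exact Real.exp_le_exp.mpr (by rw [mul_comm] at h1; linarith)
          _ ≤ f (f^[n] x) := hflow _ h0
      have hsS : (1 - s ^ (n+1)) / (1 - s) = (1 - s ^ n) / (1 - s) + s ^ n := by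
        field_simp
        ring
      have hsn : (0:ℝ) < s ^ (n+1) := pow_pos hs0 _
      have hsn' : (0:ℝ) < s ^ n := pow_pos hs0 _
      rw [hsS]
      have expand : x * Real.exp (-(x * ((1 - s ^ n) / (1 - s) + s ^ n)))
          = (x * Real.exp (-(x * ((1 - s ^ n) / (1 - s))))) * Real.exp (-(x * s ^ n)) := by
        rw [mul_assoc, ← Real.exp_add]
        ring_nf
      rw [expand]
      calc (x * Real.exp (-(x * ((1 - s ^ n) / (1 - s))))) * Real.exp (-(x * s ^ n))
          ≤ (f^[n] x / s ^ n) * Real.exp (-(x * s ^ n)) :=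
            mul_le_mul_of_nonneg_right ih (Real.exp_nonneg _)
        _ = (s * f^[n] x * Real.exp (-(x * s ^ n))) / s ^ (n+1) := by
            field_simp
            ring
        _ ≤ f^[n+1] x / s ^ (n+1) := by
            gcongr
  -- the Schröder function
  set φ : ℝ → ℝ := fun x => ⨅ n : ℕ, f^[n] x / s ^ n with hφdef
  have hbdd : ∀ x : ℝ, 0 ≤ x → BddBelow (Set.range fun n : ℕ => f^[n] x / s ^ n) := by
    intro x hx
    refine ⟨0, ?_⟩
    rintro y ⟨n, rfl⟩
    exact div_nonneg (hit x hx n).1 (pow_pos hs0 n).le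
  have htends : ∀ x : ℝ, 0 ≤ x →
      Tendsto (fun n : ℕ => f^[n] x / s ^ n) atTop (𝓝 (φ x)) := by
    intro x hx
    exact tendsto_atTop_ciInf (antitone_nat_of_succ_le (hanti x hx)) (hbdd x hx)
  have hφ0 : φ 0 = 0 := by
    have h1 := htends 0 le_rfl
    have h2 : Tendsto (fun n : ℕ => f^[n] (0:ℝ) / s ^ n) atTop (𝓝 0) := by
      have heq : (fun n : ℕ => f^[n] (0:ℝ) / s ^ n) = fun _ => (0:ℝ) := by
        funext n; rw [Function.iterate_fixed hf0]; simp
      rw [heq]; exact tendsto_const_nhds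
    exact tendsto_nhds_unique h1 h2
  have hup : ∀ x : ℝ, 0 ≤ x → φ x ≤ x := by
    intro x hx
    have h := ciInf_le (hbdd x hx) 0
    simpa using h
  have hlo : ∀ x : ℝ, 0 ≤ x → x * Real.exp (-(x / (1 - s))) ≤ φ x := by
    intro x hx
    apply le_ciInf
    intro n
    refine le_trans ?_ (hlown x hx n)
    have hsn : (0:ℝ) ≤ s ^ n := (pow_pos hs0 n).le
    have h1 : x * ((1 - s ^ n) / (1 - s)) ≤ x / (1 - s) := by
      calc x * ((1 - s ^ n) / (1 - s)) ≤ x * (1 / (1 - s)) := by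
            apply mul_le_mul_of_nonneg_left _ hx
            gcongr
            linarith
        _ = x / (1 - s) := by ring
    exact mul_le_mul_of_nonneg_left (Real.exp_le_exp.mpr (by linarith)) hx
  have hpos : ∀ x : ℝ, 0 < x → 0 < φ x := by
    intro x hx
    have := hlo x hx.le
    have he : 0 < Real.exp (-(x / (1 - s))) := Real.exp_pos _
    nlinarith
  have hschroder : ∀ x : ℝ, 0 ≤ x → φ (f x) = s * φ x := by
    intro x hx
    have hfx0 : 0 ≤ f x := (hfx x hx).1
    have h1 := htends (f x) hfx0
    have h2 : Tendsto (fun n : ℕ => f^[n] (f x) / s ^ n) atTop (𝓝 (s * φ x)) := by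
      have heq : (fun n : ℕ => f^[n] (f x) / s ^ n)
          = fun n : ℕ => s * (f^[n+1] x / s ^ (n+1)) := by
        funext n
        rw [← Function.iterate_succ_apply]
        have hss : s ^ (n+1) = s * s ^ n := by ring
        rw [hss]
        have h0 : s ^ n ≠ 0 := (pow_pos hs0 n).ne'
        field_simp
      rw [heq]
      have h3 : Tendsto (fun n : ℕ => f^[n+1] x / s ^ (n+1)) atTop (𝓝 (φ x)) :=
        (htends x hx).comp (tendsto_add_atTop_nat 1)
      exact h3.const_mul s
    exact tendsto_nhds_unique h1 h2
  have hderiv : HasDerivWithinAt φ 1 (Set.Ici 0) 0 := by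
    rw [hasDerivWithinAt_iff_tendsto_slope]
    have hset : Set.Ici (0:ℝ) \ {0} = Set.Ioi 0 := by
      ext y
      simp only [Set.mem_diff, Set.mem_Ici, Set.mem_singleton_iff, Set.mem_Ioi]
      constructor
      · rintro ⟨hy1, hy2⟩; exact lt_of_le_of_ne hy1 (Ne.symm hy2)
      · intro hy; exact ⟨hy.le, ne_of_gt hy⟩
    rw [hset]
    have hginv : Tendsto (fun y : ℝ => Real.exp (-(y / (1 - s)))) (𝓝[>] (0:ℝ)) (𝓝 1) := by
      have hc : Continuous fun y : ℝ => Real.exp (-(y / (1 - s))) :=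
        Real.continuous_exp.comp ((continuous_id.div_const (1 - s)).neg)
      have h := hc.tendsto 0
      simp only [neg_zero, zero_div, Real.exp_zero] at h
      exact h.mono_left nhdsWithin_le_nhds
    apply tendsto_of_tendsto_of_tendsto_of_le_of_le' hginv tendsto_const_nhds
    · filter_upwards [self_mem_nhdsWithin] with y hy
      have hy0 : (0:ℝ) < y := hy
      have hslope : slope φ 0 y = φ y / y := by
        rw [slope_def_field, hφ0, sub_zero, sub_zero]
      rw [hslope, le_div_iff₀ hy0, mul_comm]
      exact hlo y hy0.le
    · filter_upwards [self_mem_nhdsWithin] with y hy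
      have hy0 : (0:ℝ) < y := hy
      have hslope : slope φ 0 y = φ y / y := by
        rw [slope_def_field, hφ0, sub_zero, sub_zero]
      rw [hslope]
      exact (div_le_one hy0).mpr (hup y hy0.le)
  exact ⟨φ, htends, hpos, hschroder, hderiv⟩
end

section
/- Let ρ > 1 and p(x) = ρx(1+x). Then for every x ≥ 0 the sequence pⁿ(x/ρⁿ) converges as n → ∞ to φ⁻¹(x), where φ is the Schröder function for the inverse map f(x) = √(1/4 + x/ρ) − 1/2; in particular sup_n pⁿ(x/ρⁿ) < ∞ for each x ≥ 0. -/
open Filter Topology Set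

/-!
The scaled iterates `yₙ = pⁿ(x/ρⁿ)` increase in `n`, and the Schröder equation gives
`φ(yₙ) = ρⁿ φ(x/ρⁿ)`, which tends to `x` because `φ'(0+) = 1`. Since `f` is monotone and
`1/ρ`-Lipschitz on `[0, ∞)`, the limit `φ = lim ρⁿ fⁿ` is monotone and `1`-Lipschitz there.
Monotonicity of `φ` bounds `yₙ` by a point where `φ` exceeds `x`, so `yₙ` converges to some
`L ≥ 0`, and continuity of `φ` gives `φ(L) = x`, that is `L = φ⁻¹(x)`.
-/

theorem MonotoneOn.iterate {α : Type*} [Preorder α] {f : α → α} {s : Set α}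
    (hf : MonotoneOn f s) (hs : MapsTo f s s) (n : ℕ) : MonotoneOn f^[n] s := by
  induction n with
  | zero => exact monotone_id.monotoneOn s
  | succ n ih =>
    intro a ha b hb hab
    rw [Function.iterate_succ_apply, Function.iterate_succ_apply]
    exact ih (hs ha) (hs hb) (hf ha hb hab)

noncomputable section

def quadMap (ρ x : ℝ) : ℝ := ρ * x * (1 + x)

def quadMapInv (ρ x : ℝ) : ℝ := √(1 / 4 + x / ρ) - 1 / 2

end

section QuadMap

variable {ρ : ℝ}

theorem mapsTo_quadMap (hρ : 0 ≤ ρ) : MapsTo (quadMap ρ) (Ici 0) (Ici 0) :=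
  fun a (ha : 0 ≤ a) => show 0 ≤ ρ * a * (1 + a) by positivity

theorem monotoneOn_quadMap (hρ : 0 ≤ ρ) : MonotoneOn (quadMap ρ) (Ici 0) :=
  fun a (ha : 0 ≤ a) b (hb : 0 ≤ b) hab => show ρ * a * (1 + a) ≤ ρ * b * (1 + b) by gcongr

theorem mul_le_quadMap (hρ : 0 ≤ ρ) {a : ℝ} (ha : 0 ≤ a) : ρ * a ≤ quadMap ρ a :=
  le_mul_of_one_le_right (by positivity) (by linarith)

theorem leftInvOn_quadMapInv (hρ : ρ ≠ 0) : LeftInvOn (quadMapInv ρ) (quadMap ρ) (Ici 0) := by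
  intro a (ha : 0 ≤ a)
  have hsq : 1 / 4 + ρ * a * (1 + a) / ρ = (a + 1 / 2) ^ 2 := by field_simp; ring
  rw [quadMap, quadMapInv, hsq, Real.sqrt_sq (by linarith)]
  ring

theorem quadMapInv_zero : quadMapInv ρ 0 = 0 := by
  norm_num [quadMapInv, show (1 / 4 : ℝ) = (1 / 2) ^ 2 by norm_num]

theorem monotone_quadMapInv (hρ : 0 ≤ ρ) : Monotone (quadMapInv ρ) := fun a b hab => by
  unfold quadMapInv; gcongr

theorem half_le_sqrt_quarter_add_div (hρ : 0 ≤ ρ) {a : ℝ} (ha : 0 ≤ a) :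
    1 / 2 ≤ √(1 / 4 + a / ρ) :=
  Real.le_sqrt_of_sq_le (by norm_num; positivity)

theorem mapsTo_quadMapInv (hρ : 0 ≤ ρ) : MapsTo (quadMapInv ρ) (Ici 0) (Ici 0) :=
  fun _ ha => sub_nonneg.2 (half_le_sqrt_quarter_add_div hρ ha)

theorem quadMapInv_sub_le_div (hρ : 0 < ρ) {a b : ℝ} (ha : 0 ≤ a) (hab : a ≤ b) :
    quadMapInv ρ b - quadMapInv ρ a ≤ (b - a) / ρ := by
  have hb : 0 ≤ b := ha.trans hab
  have hA := Real.sq_sqrt (show 0 ≤ 1 / 4 + a / ρ by positivity)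
  have hB := Real.sq_sqrt (show 0 ≤ 1 / 4 + b / ρ by positivity)
  have hA' := half_le_sqrt_quarter_add_div hρ.le ha
  have hAB : √(1 / 4 + a / ρ) ≤ √(1 / 4 + b / ρ) := Real.sqrt_le_sqrt (by gcongr)
  -- `√B - √A = (B - A) / (√B + √A)` with `√A + √B ≥ 1`
  have hdiff :
      (√(1 / 4 + b / ρ) - √(1 / 4 + a / ρ)) * (√(1 / 4 + b / ρ) + √(1 / 4 + a / ρ)) =
        (b - a) / ρ := by
    linear_combination hB - hA
  unfold quadMapInv
  nlinarith

end QuadMap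

section SchroderLimit

variable {ρ : ℝ} {f φ : ℝ → ℝ}

theorem iterate_sub_le_div_pow (hρ : 0 < ρ) (hmaps : MapsTo f (Ici 0) (Ici 0))
    (hmono : Monotone f) (hcontr : ∀ a b, 0 ≤ a → a ≤ b → f b - f a ≤ (b - a) / ρ)
    (n : ℕ) {a b : ℝ} (ha : 0 ≤ a) (hab : a ≤ b) :
    f^[n] b - f^[n] a ≤ (b - a) / ρ ^ n := by
  induction n with
  | zero => simp
  | succ n ih =>
    rw [Function.iterate_succ_apply', Function.iterate_succ_apply']
    calc f (f^[n] b) - f (f^[n] a) ≤ (f^[n] b - f^[n] a) / ρ :=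
          hcontr _ _ (hmaps.iterate n ha) (hmono.iterate n hab)
      _ ≤ (b - a) / ρ ^ n / ρ := by gcongr
      _ = (b - a) / ρ ^ (n + 1) := by rw [div_div, pow_succ]

variable (hφ : ∀ x, 0 ≤ x → Tendsto (fun n : ℕ => f^[n] x * ρ ^ n) atTop (𝓝 (φ x)))
include hφ

theorem monotoneOn_of_tendsto_iterate_mul_pow (hρ : 0 ≤ ρ) (hmono : Monotone f) :
    MonotoneOn φ (Ici 0) := fun a (ha : 0 ≤ a) b _ hab =>
  le_of_tendsto_of_tendsto' (hφ a ha) (hφ b (ha.trans hab)) fun n => by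
    gcongr; exact hmono.iterate n hab

theorem lipschitzOnWith_one_of_tendsto_iterate_mul_pow (hρ : 0 < ρ)
    (hmaps : MapsTo f (Ici 0) (Ici 0)) (hmono : Monotone f)
    (hcontr : ∀ a b, 0 ≤ a → a ≤ b → f b - f a ≤ (b - a) / ρ) :
    LipschitzOnWith 1 φ (Ici 0) := by
  have hφmono := monotoneOn_of_tendsto_iterate_mul_pow hφ hρ.le hmono
  refine LipschitzOnWith.of_le_add fun b (hb : 0 ≤ b) a (ha : 0 ≤ a) => ?_
  rcases le_total b a with hba | hab
  · linarith [hφmono hb ha hba, dist_nonneg (x := b) (y := a)]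
  have hsub : φ b - φ a ≤ b - a :=
    le_of_tendsto_of_tendsto' ((hφ b hb).sub (hφ a ha)) tendsto_const_nhds fun n => by
      have := iterate_sub_le_div_pow hρ hmaps hmono hcontr n ha hab
      rw [← sub_mul]
      exact (le_div_iff₀ (pow_pos hρ n)).1 this
  rw [Real.dist_eq, abs_of_nonneg (sub_nonneg.2 hab)]
  linarith

theorem apply_zero_of_tendsto_iterate_mul_pow (hf₀ : f 0 = 0) : φ 0 = 0 :=
  tendsto_nhds_unique (hφ 0 le_rfl) (by simp [Function.iterate_fixed hf₀])

end SchroderLimit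

theorem apply_iterate_eq_pow_mul {ρ : ℝ} {f p φ : ℝ → ℝ} (hρ : ρ ≠ 0)
    (hschroder : ∀ x, 0 ≤ x → φ (f x) = φ x / ρ) (hinv : LeftInvOn f p (Ici 0))
    (hp : MapsTo p (Ici 0) (Ici 0)) (n : ℕ) {a : ℝ} (ha : 0 ≤ a) :
    φ (p^[n] a) = ρ ^ n * φ a := by
  induction n with
  | zero => simp
  | succ n ih =>
    have hpn : 0 ≤ p^[n] a := hp.iterate n ha
    have h := hschroder _ (hp hpn)
    rw [hinv hpn, ih, eq_div_iff hρ] at h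
    rw [Function.iterate_succ_apply', ← h]
    ring

theorem tendsto_mul_apply_div_of_hasDerivWithinAt {ι : Type*} {l : Filter ι} {φ : ℝ → ℝ}
    {φ' x : ℝ} (hφ : HasDerivWithinAt φ φ' (Ici 0) 0) (hφ₀ : φ 0 = 0) (hx : 0 ≤ x)
    {c : ι → ℝ} (hc : Tendsto c l atTop) :
    Tendsto (fun i => c i * φ (x / c i)) l (𝓝 (φ' * x)) := by
  have hscaled : HasDerivWithinAt (fun t => φ (x * t)) (φ' * x) (Ici 0) 0 := by
    have h := hφ.comp_of_eq 0 ((hasDerivWithinAt_id 0 (Ici 0)).const_mul x)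
      (fun t (ht : 0 ≤ t) => mul_nonneg hx ht) (mul_zero x).symm
    rw [mul_one] at h
    exact h
  have hslope := hasDerivWithinAt_iff_tendsto_slope.1 hscaled
  rw [Ici_sdiff_left] at hslope
  replace hslope := hslope.comp (tendsto_inv_atTop_nhdsGT_zero.comp hc)
  refine hslope.congr fun i => ?_
  simp [slope_def_field, hφ₀, div_eq_mul_inv, mul_comm]

theorem monotone_iterate_apply_div_pow {ρ x : ℝ} {p : ℝ → ℝ} (hρ : 0 < ρ)
    (hmaps : MapsTo p (Ici 0) (Ici 0)) (hmono : MonotoneOn p (Ici 0))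
    (hle : ∀ a, 0 ≤ a → ρ * a ≤ p a) (hx : 0 ≤ x) :
    Monotone fun n : ℕ => p^[n] (x / ρ ^ n) := by
  refine monotone_nat_of_le_succ fun n => ?_
  have hx' : 0 ≤ x / ρ ^ (n + 1) := by positivity
  have hstep : x / ρ ^ n ≤ p (x / ρ ^ (n + 1)) := by
    calc x / ρ ^ n = ρ * (x / ρ ^ (n + 1)) := by field_simp; ring
      _ ≤ _ := hle _ hx'
  simp only [Function.iterate_succ_apply]
  exact hmono.iterate hmaps n (by positivity : (0 : ℝ) ≤ x / ρ ^ n) (hmaps hx') hstep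

theorem tendsto_apply_iterate_div_pow {ρ : ℝ} {f p φ : ℝ → ℝ} (hρ : 1 < ρ)
    (hschroder : ∀ x, 0 ≤ x → φ (f x) = φ x / ρ) (hinv : LeftInvOn f p (Ici 0))
    (hp : MapsTo p (Ici 0) (Ici 0)) (hderiv : HasDerivWithinAt φ 1 (Ici 0) 0) (hφ₀ : φ 0 = 0)
    {x : ℝ} (hx : 0 ≤ x) : Tendsto (fun n : ℕ => φ (p^[n] (x / ρ ^ n))) atTop (𝓝 x) := by
  have hρ₀ : 0 < ρ := by linarith
  simpa [apply_iterate_eq_pow_mul hρ₀.ne' hschroder hinv hp _ (by positivity : 0 ≤ x / ρ ^ _)]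
    using tendsto_mul_apply_div_of_hasDerivWithinAt hderiv hφ₀ hx
      (tendsto_pow_atTop_atTop_of_one_lt hρ)

theorem exists_tendsto_of_tendsto_apply {y : ℕ → ℝ} {φ : ℝ → ℝ} {x M : ℝ}
    (hφmono : MonotoneOn φ (Ici 0)) (hφcont : ContinuousOn φ (Ici 0)) (hy : Monotone y)
    (hy₀ : ∀ n, 0 ≤ y n) (hφy : Tendsto (fun n => φ (y n)) atTop (𝓝 x)) (hM : 0 ≤ M)
    (hxM : x < φ M) : ∃ L, 0 ≤ L ∧ φ L = x ∧ Tendsto y atTop (𝓝 L) := by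
  have hφy_le : ∀ n, φ (y n) ≤ x :=
    Monotone.ge_of_tendsto (fun m n hmn => hφmono (hy₀ m) (hy₀ n) (hy hmn)) hφy
  have hbdd : BddAbove (range y) :=
    ⟨M, forall_mem_range.2 fun n =>
      (hφmono.reflect_lt (hy₀ n) hM ((hφy_le n).trans_lt hxM)).le⟩
  have hyL := tendsto_atTop_ciSup hy hbdd
  have hL₀ : 0 ≤ ⨆ n, y n := (hy₀ 0).trans (le_ciSup hbdd 0)
  refine ⟨_, hL₀, tendsto_nhds_unique ?_ hφy, hyL⟩
  exact (hφcont _ hL₀).tendsto.comp (tendsto_nhdsWithin_iff.2 ⟨hyL, .of_forall hy₀⟩)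

theorem scaled_iterates_converge_to_inverse_schroder_general
    (ρ : ℝ) (hρ : 1 < ρ)
    (p f : ℝ → ℝ)
    (hp : ∀ x : ℝ, p x = ρ * x * (1 + x))
    (hf : ∀ x : ℝ, f x = Real.sqrt (1 / 4 + x / ρ) - 1 / 2)
    (φ φinv : ℝ → ℝ)
    (hφ : ∀ x : ℝ, 0 ≤ x →
      Tendsto (fun n : ℕ => f^[n] x * ρ ^ n) atTop (𝓝 (φ x)))
    (hschroder : ∀ x : ℝ, 0 ≤ x → φ (f x) = φ x / ρ)
    (hderiv : HasDerivWithinAt φ 1 (Set.Ici 0) 0)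
    (hinv2 : ∀ x : ℝ, 0 ≤ x → φinv (φ x) = x) :
    ∀ x : ℝ, 0 ≤ x →
      Tendsto (fun n : ℕ => p^[n] (x / ρ ^ n)) atTop (𝓝 (φinv x)) ∧
      BddAbove (Set.range fun n : ℕ => p^[n] (x / ρ ^ n)) := by
  obtain rfl : p = quadMap ρ := funext hp
  obtain rfl : f = quadMapInv ρ := funext hf
  have hρ₀ : 0 < ρ := by linarith
  have hmaps := mapsTo_quadMap hρ₀.le
  have hfmono := monotone_quadMapInv hρ₀.le
  have hφmono := monotoneOn_of_tendsto_iterate_mul_pow hφ hρ₀.le hfmono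
  have hφcont := (lipschitzOnWith_one_of_tendsto_iterate_mul_pow hφ hρ₀
    (mapsTo_quadMapInv hρ₀.le) hfmono fun _ _ => quadMapInv_sub_le_div hρ₀).continuousOn
  have hφy := fun x (hx : 0 ≤ x) => tendsto_apply_iterate_div_pow hρ hschroder
    (leftInvOn_quadMapInv hρ₀.ne') hmaps hderiv
    (apply_zero_of_tendsto_iterate_mul_pow hφ quadMapInv_zero) hx
  intro x hx
  -- a point `M = pᴺ((x + 1)/ρᴺ)` with `φ M > x` bounds the iterates
  obtain ⟨N, hN⟩ :=
    ((hφy (x + 1) (by linarith)).eventually (eventually_gt_nhds (lt_add_one x))).exists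
  obtain ⟨L, hL₀, hφL, hyL⟩ := exists_tendsto_of_tendsto_apply hφmono hφcont
    (monotone_iterate_apply_div_pow hρ₀ hmaps (monotoneOn_quadMap hρ₀.le)
      (fun _ => mul_le_quadMap hρ₀.le) hx)
    (fun n => hmaps.iterate n (by positivity : (0 : ℝ) ≤ x / ρ ^ n)) (hφy x hx)
    (hmaps.iterate N (by positivity : (0 : ℝ) ≤ (x + 1) / ρ ^ N)) hN
  rw [show φinv x = L from hφL ▸ hinv2 L hL₀]
  exact ⟨hyL, hyL.bddAbove_range⟩

/-- For `p(x) = ρx(1+x)` the scaled iterates `pⁿ(x/ρⁿ)` converge to `φ⁻¹(x)`,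
where `φ` is the Schröder function of the inverse branch `f`; in particular
they are bounded in `n`. -/
theorem scaled_iterates_converge_to_inverse_schroder
    (ρ : ℝ) (hρ : 1 < ρ)
    (p f : ℝ → ℝ)
    (hp : ∀ x : ℝ, p x = ρ * x * (1 + x))
    (hf : ∀ x : ℝ, f x = Real.sqrt (1 / 4 + x / ρ) - 1 / 2)
    (φ φinv : ℝ → ℝ)
    (hφ : ∀ x : ℝ, 0 ≤ x →
      Tendsto (fun n : ℕ => f^[n] x * ρ ^ n) atTop (𝓝 (φ x)))
    (hschroder : ∀ x : ℝ, 0 ≤ x → φ (f x) = φ x / ρ)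
    (hderiv : HasDerivWithinAt φ 1 (Set.Ici 0) 0)
    (hinv1 : ∀ y : ℝ, 0 ≤ y → φ (φinv y) = y)
    (hinv2 : ∀ x : ℝ, 0 ≤ x → φinv (φ x) = x) :
    ∀ x : ℝ, 0 ≤ x →
      Tendsto (fun n : ℕ => p^[n] (x / ρ ^ n)) atTop (𝓝 (φinv x)) ∧
      BddAbove (Set.range fun n : ℕ => p^[n] (x / ρ ^ n)) :=
  scaled_iterates_converge_to_inverse_schroder_general ρ hρ p f hp hf φ φinv hφ hschroder hderiv
    hinv2
end

section
/- Define g(x) = f(x^re + x) − x^re where x^re = (a1, 0). Then g can be written as g(x) = (I − B(x)) A x where A is the Jacobian of f at x^re, and there is a constant C (depending only on a1, a2, γ) such that ‖B(x)‖∞ ≤ C‖x‖∞ for all x in E = [x1co − a1, ∞) × [0, x2co]. -/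
/-- Around the resident equilibrium, `g(x) = f(x^re + x) − x^re` has the form
`g(x) = (I − B(x)) A x` with `‖B(x)‖ ≤ C ‖x‖` on `E = [x1co − a1, ∞) × [0, x2co]`. -/
theorem g_decomposition_with_B
    (a1 a2 γ : ℝ) (ha1 : 0 < a1) (ha2 : 0 < a2) (hγ0 : 0 < γ) (hγ1 : γ < 1)
    (hc1 : a1 - γ * a2 > 0) (hc2 : a2 - γ * a1 > 0)
    (f : ℝ × ℝ → ℝ × ℝ)
    (hf : ∀ x : ℝ × ℝ,
      f x = (2 * x.1 * a1 / (a1 + x.1 + γ * x.2),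
             2 * x.2 * a2 / (a2 + γ * x.1 + x.2)))
    (ρ : ℝ) (hρ : ρ = 2 * a2 / (a2 + γ * a1))
    (g : ℝ × ℝ → ℝ × ℝ)
    (hg : ∀ x : ℝ × ℝ, g x = f (((a1 : ℝ), (0 : ℝ)) + x) - ((a1 : ℝ), (0 : ℝ)))
    (A : ℝ × ℝ →L[ℝ] ℝ × ℝ)
    (hA : ∀ v : ℝ × ℝ, A v = ((1 / 2) * v.1 - (γ / 2) * v.2, ρ * v.2))
    (x1co x2co : ℝ)
    (h1 : x1co = (a1 - γ * a2) / (1 - γ ^ 2))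
    (h2 : x2co = (a2 - γ * a1) / (1 - γ ^ 2)) :
    ∃ (B : ℝ × ℝ → (ℝ × ℝ →L[ℝ] ℝ × ℝ)) (C : ℝ), 0 < C ∧
      ∀ x ∈ Set.Ici (x1co - a1) ×ˢ Set.Icc (0 : ℝ) x2co,
        g x = A x - B x (A x) ∧ ‖B x‖ ≤ C * ‖x‖ := by
  have hγsq : 0 < 1 - γ ^ 2 := by nlinarith
  have hx1co : 0 < x1co := by rw [h1]; exact div_pos hc1 hγsq
  have hm1 : (0:ℝ) < a1 + x1co := by linarith
  have hm2 : (0:ℝ) < a2 + γ * x1co := by positivity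
  refine ⟨fun x =>
      (((x.1 + γ * x.2) / (2 * a1 + x.1 + γ * x.2)) • ContinuousLinearMap.fst ℝ ℝ ℝ).prod
      (((γ * x.1 + x.2) / (a2 + γ * a1 + γ * x.1 + x.2)) • ContinuousLinearMap.snd ℝ ℝ ℝ),
    2 / (a1 + x1co) + 2 / (a2 + γ * x1co), by positivity, ?_⟩
  rintro x ⟨hx1, hx2⟩
  simp only [Set.mem_Ici] at hx1
  obtain ⟨hx2a, hx2b⟩ := hx2
  have hd1 : a1 + x1co ≤ 2 * a1 + x.1 + γ * x.2 := by nlinarith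
  have hd2 : a2 + γ * x1co ≤ a2 + γ * a1 + γ * x.1 + x.2 := by nlinarith
  have hd1p : (0:ℝ) < 2 * a1 + x.1 + γ * x.2 := lt_of_lt_of_le hm1 hd1
  have hd2p : (0:ℝ) < a2 + γ * a1 + γ * x.1 + x.2 := lt_of_lt_of_le hm2 hd2
  have hden : (0:ℝ) < a2 + γ * a1 := by positivity
  have hd1ne : (2 * a1 + x.1 + γ * x.2) ≠ 0 := ne_of_gt hd1p
  have hd2ne : (a2 + γ * a1 + γ * x.1 + x.2) ≠ 0 := ne_of_gt hd2p
  have hdenne : (a2 + γ * a1) ≠ 0 := ne_of_gt hden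
  constructor
  · have h := hg x
    rw [hf] at h
    rw [h]
    have e1 : (((a1:ℝ), (0:ℝ)) + x).1 = a1 + x.1 := rfl
    have e2 : (((a1:ℝ), (0:ℝ)) + x).2 = 0 + x.2 := rfl
    apply Prod.ext
    · simp only [e1, e2, Prod.fst_sub, ContinuousLinearMap.prod_apply,
        ContinuousLinearMap.coe_smul', Pi.smul_apply, ContinuousLinearMap.coe_fst',
        smul_eq_mul, hA]
      rw [show a1 + (a1 + x.1) + γ * (0 + x.2) = 2 * a1 + x.1 + γ * x.2 by ring]
      field_simp
      ring
    · simp only [e1, e2, Prod.snd_sub, ContinuousLinearMap.prod_apply,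
        ContinuousLinearMap.coe_smul', Pi.smul_apply, ContinuousLinearMap.coe_snd',
        smul_eq_mul, hA, hρ]
      rw [show a2 + γ * (a1 + x.1) + (0 + x.2) = a2 + γ * a1 + γ * x.1 + x.2 by ring]
      field_simp
      ring
  · apply ContinuousLinearMap.opNorm_le_bound _ (by positivity)
    intro v
    have hb1 : |(x.1 + γ * x.2) / (2 * a1 + x.1 + γ * x.2)| ≤ 2 / (a1 + x1co) * ‖x‖ := by
      rw [abs_div, abs_of_pos hd1p, div_le_iff₀ hd1p]
      have h1' : |x.1| ≤ ‖x‖ := norm_fst_le x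
      have h2' : |x.2| ≤ ‖x‖ := norm_snd_le x
      have habs : |x.1 + γ * x.2| ≤ |x.1| + γ * |x.2| := by
        calc |x.1 + γ * x.2| ≤ |x.1| + |γ * x.2| := abs_add_le _ _
        _ = |x.1| + γ * |x.2| := by rw [abs_mul, abs_of_pos hγ0]
      have hxn : 0 ≤ ‖x‖ := norm_nonneg x
      have step1 : |x.1 + γ * x.2| ≤ 2 * ‖x‖ := by nlinarith [abs_nonneg x.1, abs_nonneg x.2]
      have step2 : (2 / (a1 + x1co) * ‖x‖) * (a1 + x1co) = 2 * ‖x‖ := by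
        field_simp
      have step3 : (2 / (a1 + x1co) * ‖x‖) * (a1 + x1co)
          ≤ (2 / (a1 + x1co) * ‖x‖) * (2 * a1 + x.1 + γ * x.2) :=
        mul_le_mul_of_nonneg_left hd1 (by positivity)
      linarith
    have hb2 : |(γ * x.1 + x.2) / (a2 + γ * a1 + γ * x.1 + x.2)| ≤ 2 / (a2 + γ * x1co) * ‖x‖ := by
      rw [abs_div, abs_of_pos hd2p, div_le_iff₀ hd2p]
      have h1' : |x.1| ≤ ‖x‖ := norm_fst_le x
      have h2' : |x.2| ≤ ‖x‖ := norm_snd_le x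
      have habs : |γ * x.1 + x.2| ≤ γ * |x.1| + |x.2| := by
        calc |γ * x.1 + x.2| ≤ |γ * x.1| + |x.2| := abs_add_le _ _
        _ = γ * |x.1| + |x.2| := by rw [abs_mul, abs_of_pos hγ0]
      have hxn : 0 ≤ ‖x‖ := norm_nonneg x
      have step1 : |γ * x.1 + x.2| ≤ 2 * ‖x‖ := by nlinarith [abs_nonneg x.1, abs_nonneg x.2]
      have step2 : (2 / (a2 + γ * x1co) * ‖x‖) * (a2 + γ * x1co) = 2 * ‖x‖ := by
        field_simp
      have step3 : (2 / (a2 + γ * x1co) * ‖x‖) * (a2 + γ * x1co)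
          ≤ (2 / (a2 + γ * x1co) * ‖x‖) * (a2 + γ * a1 + γ * x.1 + x.2) :=
        mul_le_mul_of_nonneg_left hd2 (by positivity)
      linarith
    have hC : 2 / (a1 + x1co) * ‖x‖ ≤ (2 / (a1 + x1co) + 2 / (a2 + γ * x1co)) * ‖x‖ := by
      apply mul_le_mul_of_nonneg_right _ (norm_nonneg x)
      have : (0:ℝ) ≤ 2 / (a2 + γ * x1co) := by positivity
      linarith
    have hC2 : 2 / (a2 + γ * x1co) * ‖x‖ ≤ (2 / (a1 + x1co) + 2 / (a2 + γ * x1co)) * ‖x‖ := by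
      apply mul_le_mul_of_nonneg_right _ (norm_nonneg x)
      have : (0:ℝ) ≤ 2 / (a1 + x1co) := by positivity
      linarith
    simp only [ContinuousLinearMap.prod_apply, ContinuousLinearMap.coe_smul',
      Pi.smul_apply, ContinuousLinearMap.coe_fst', ContinuousLinearMap.coe_snd',
      smul_eq_mul, Prod.norm_def, Real.norm_eq_abs]
    rw [max_le_iff]
    constructor
    · rw [abs_mul]
      calc |(x.1 + γ * x.2) / (2 * a1 + x.1 + γ * x.2)| * |v.1|
          ≤ (2 / (a1 + x1co) * ‖x‖) * ‖v‖ := by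
            apply mul_le_mul hb1 (norm_fst_le v) (abs_nonneg _) (by positivity)
        _ ≤ _ := by
            apply mul_le_mul_of_nonneg_right hC (norm_nonneg v)
    · rw [abs_mul]
      calc |(γ * x.1 + x.2) / (a2 + γ * a1 + γ * x.1 + x.2)| * |v.2|
          ≤ (2 / (a2 + γ * x1co) * ‖x‖) * ‖v‖ := by
            apply mul_le_mul hb2 (norm_snd_le v) (abs_nonneg _) (by positivity)
        _ ≤ _ := by
            apply mul_le_mul_of_nonneg_right hC2 (norm_nonneg v)
end

section
/- For g(x) = f(x^re + x) − x^re and x, y in E = [x1co − a1, ∞) × [0, x2co], one has g(x) − g(y) = (A + F(x,y))(x − y) where ‖F(x,y)‖∞ ≤ C max(‖x‖∞, ‖y‖∞) for a constant C depending only on a1, a2, γ. -/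
/-!
Both components of `g` are linear-fractional:
`g₁ x = a1 (x₁ - γ x₂) / (2 a1 + x₁ + γ x₂)` and `g₂ x = 2 a2 x₂ / (a2 + γ a1 + γ x₁ + x₂)`.
For `h = p / (c + q)` with `p, q` linear, `h x - h y = c⁻¹ p (x - y) + R x y (x - y)` holds
exactly, and the coefficients of the remainder `R x y` are `O(‖x‖ + ‖y‖)` as long as `c` and
the denominators at `x`, `y` are bounded below. On the region `x₁ ≥ x1co - a1`, `x₂ ≥ 0` the
denominators are at least `a1`, resp. `a2`, because `x1co > 0`.
-/

open ContinuousLinearMap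

section LinearFractional

variable {E : Type*} [NormedAddCommGroup E] [NormedSpace ℝ E]

noncomputable def linearFractionalRemainder (p q : E →L[ℝ] ℝ) (c : ℝ) (x y : E) : E →L[ℝ] ℝ :=
  -(q x / (c * (c + q x))) • p - (p y / ((c + q x) * (c + q y))) • q

theorem div_sub_div_eq_linearFractionalRemainder (p q : E →L[ℝ] ℝ) {c : ℝ} {x y : E}
    (hc : c ≠ 0) (hx : c + q x ≠ 0) (hy : c + q y ≠ 0) :
    p x / (c + q x) - p y / (c + q y) =
      c⁻¹ * p (x - y) + linearFractionalRemainder p q c x y (x - y) := by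
  simp only [linearFractionalRemainder, sub_apply, smul_apply, smul_eq_mul, map_sub]
  field_simp
  ring

theorem norm_linearFractionalRemainder_le (p q : E →L[ℝ] ℝ) {c δ : ℝ} {x y : E} (hδ : 0 < δ)
    (hc : δ ≤ c) (hx : δ ≤ c + q x) (hy : δ ≤ c + q y) :
    ‖linearFractionalRemainder p q c x y‖ ≤ 2 * ‖p‖ * ‖q‖ / δ ^ 2 * max ‖x‖ ‖y‖ := by
  have key : ∀ {a b : ℝ}, δ ≤ a → δ ≤ b → ∀ r : ℝ, ‖r / (a * b)‖ ≤ ‖r‖ / δ ^ 2 := by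
    intro a b ha hb r
    have hab : 0 < a * b := mul_pos (hδ.trans_le ha) (hδ.trans_le hb)
    rw [norm_div, Real.norm_eq_abs (a * b), abs_of_pos hab, sq]
    exact div_le_div_of_nonneg_left (norm_nonneg r) (by positivity)
      (mul_le_mul ha hb hδ.le (hδ.le.trans ha))
  have hqx : ‖q x / (c * (c + q x))‖ ≤ ‖q‖ * ‖x‖ / δ ^ 2 :=
    (key hc hx _).trans (by gcongr; exact q.le_opNorm x)
  have hpy : ‖p y / ((c + q x) * (c + q y))‖ ≤ ‖p‖ * ‖y‖ / δ ^ 2 :=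
    (key hx hy _).trans (by gcongr; exact p.le_opNorm y)
  calc ‖linearFractionalRemainder p q c x y‖
      ≤ ‖q x / (c * (c + q x))‖ * ‖p‖ + ‖p y / ((c + q x) * (c + q y))‖ * ‖q‖ := by
        refine (norm_sub_le _ _).trans ?_
        rw [norm_smul, norm_neg, norm_smul]
    _ ≤ ‖q‖ * ‖x‖ / δ ^ 2 * ‖p‖ + ‖p‖ * ‖y‖ / δ ^ 2 * ‖q‖ := by gcongr
    _ = ‖p‖ * ‖q‖ / δ ^ 2 * (‖x‖ + ‖y‖) := by ring
    _ ≤ ‖p‖ * ‖q‖ / δ ^ 2 * (2 * max ‖x‖ ‖y‖) := by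
        gcongr
        linarith [le_max_left ‖x‖ ‖y‖, le_max_right ‖x‖ ‖y‖]
    _ = 2 * ‖p‖ * ‖q‖ / δ ^ 2 * max ‖x‖ ‖y‖ := by ring

theorem exists_increment_decomposition_of_linearFractional {S : Set E} {G : E → ℝ × ℝ}
    {k₁ k₂ c₁ c₂ δ₁ δ₂ : ℝ} (p₁ q₁ p₂ q₂ : E →L[ℝ] ℝ) (hδ₁ : 0 < δ₁) (hδ₂ : 0 < δ₂)
    (hc₁ : δ₁ ≤ c₁) (hc₂ : δ₂ ≤ c₂)
    (hD₁ : ∀ x ∈ S, δ₁ ≤ c₁ + q₁ x) (hD₂ : ∀ x ∈ S, δ₂ ≤ c₂ + q₂ x)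
    (hG : ∀ x ∈ S, G x = (k₁ * (p₁ x / (c₁ + q₁ x)), k₂ * (p₂ x / (c₂ + q₂ x)))) :
    ∃ (F : E → E → (E →L[ℝ] ℝ × ℝ)) (C : ℝ), 0 < C ∧ ∀ x ∈ S, ∀ y ∈ S,
      G x - G y = ((k₁ / c₁) • p₁).prod ((k₂ / c₂) • p₂) (x - y) + F x y (x - y) ∧
      ‖F x y‖ ≤ C * max ‖x‖ ‖y‖ := by
  set K₁ := 2 * ‖p₁‖ * ‖q₁‖ / δ₁ ^ 2
  set K₂ := 2 * ‖p₂‖ * ‖q₂‖ / δ₂ ^ 2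
  refine ⟨fun x y => (k₁ • linearFractionalRemainder p₁ q₁ c₁ x y).prod
    (k₂ • linearFractionalRemainder p₂ q₂ c₂ x y), |k₁| * K₁ + |k₂| * K₂ + 1, by positivity,
    fun x hx y hy => ⟨?_, ?_⟩⟩
  · have h₁ := div_sub_div_eq_linearFractionalRemainder p₁ q₁ (hδ₁.trans_le hc₁).ne'
      (hδ₁.trans_le (hD₁ x hx)).ne' (hδ₁.trans_le (hD₁ y hy)).ne'
    have h₂ := div_sub_div_eq_linearFractionalRemainder p₂ q₂ (hδ₂.trans_le hc₂).ne'
      (hδ₂.trans_le (hD₂ x hx)).ne' (hδ₂.trans_le (hD₂ y hy)).ne'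
    rw [hG x hx, hG y hy]
    ext
    · simp only [Prod.fst_sub, Prod.fst_add, prod_apply, smul_apply, smul_eq_mul, ← mul_sub, h₁]
      ring
    · simp only [Prod.snd_sub, Prod.snd_add, prod_apply, smul_apply, smul_eq_mul, ← mul_sub, h₂]
      ring
  · have hR₁ := norm_linearFractionalRemainder_le p₁ q₁ hδ₁ hc₁ (hD₁ x hx) (hD₁ y hy)
    have hR₂ := norm_linearFractionalRemainder_le p₂ q₂ hδ₂ hc₂ (hD₂ x hx) (hD₂ y hy)
    have hm : 0 ≤ max ‖x‖ ‖y‖ := (norm_nonneg x).trans (le_max_left _ _)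
    have hkK₁ : 0 ≤ |k₁| * K₁ := by positivity
    have hkK₂ : 0 ≤ |k₂| * K₂ := by positivity
    rw [opNorm_prod, Prod.norm_def, norm_smul, norm_smul, Real.norm_eq_abs, Real.norm_eq_abs]
    refine max_le ?_ ?_
    · calc |k₁| * ‖linearFractionalRemainder p₁ q₁ c₁ x y‖ ≤ |k₁| * K₁ * max ‖x‖ ‖y‖ := by
            rw [mul_assoc]; gcongr
        _ ≤ (|k₁| * K₁ + |k₂| * K₂ + 1) * max ‖x‖ ‖y‖ := by gcongr; linarith
    · calc |k₂| * ‖linearFractionalRemainder p₂ q₂ c₂ x y‖ ≤ |k₂| * K₂ * max ‖x‖ ‖y‖ := by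
            rw [mul_assoc]; gcongr
        _ ≤ (|k₁| * K₁ + |k₂| * K₂ + 1) * max ‖x‖ ‖y‖ := by gcongr; linarith

end LinearFractional

theorem le_denominators_of_mem {a1 a2 γ s t : ℝ} {x : ℝ × ℝ} (hγ : 0 ≤ γ) (hs : 0 ≤ s)
    (hx : x ∈ Set.Ici (s - a1) ×ˢ Set.Icc 0 t) :
    a1 ≤ 2 * a1 + (x.1 + γ * x.2) ∧ a2 ≤ a2 + γ * a1 + (γ * x.1 + x.2) := by
  obtain ⟨hx₁, hx₂, -⟩ := hx
  rw [Set.mem_Ici] at hx₁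
  constructor
  · linarith [mul_nonneg hγ hx₂]
  · linarith [mul_le_mul_of_nonneg_left hx₁ hγ, mul_nonneg hγ hs]

theorem shifted_eq_linearFractional {a1 a2 γ : ℝ} {f g : ℝ × ℝ → ℝ × ℝ}
    (hf : ∀ x : ℝ × ℝ,
      f x = (2 * x.1 * a1 / (a1 + x.1 + γ * x.2), 2 * x.2 * a2 / (a2 + γ * x.1 + x.2)))
    (hg : ∀ x : ℝ × ℝ, g x = f ((a1, 0) + x) - (a1, 0)) {x : ℝ × ℝ}
    (h₁ : 2 * a1 + (x.1 + γ * x.2) ≠ 0) (h₂ : a2 + γ * a1 + (γ * x.1 + x.2) ≠ 0) :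
    g x = (a1 * ((x.1 - γ * x.2) / (2 * a1 + (x.1 + γ * x.2))),
      2 * a2 * (x.2 / (a2 + γ * a1 + (γ * x.1 + x.2)))) := by
  rw [hg, hf, Prod.fst_add, Prod.snd_add, zero_add, Prod.mk_sub_mk, sub_zero,
    show a1 + (a1 + x.1) + γ * x.2 = 2 * a1 + (x.1 + γ * x.2) by ring,
    show a2 + γ * (a1 + x.1) + x.2 = a2 + γ * a1 + (γ * x.1 + x.2) by ring]
  ext
  · field_simp
    ring
  · field_simp

theorem g_increment_decomposition_with_F_general
    (a1 a2 γ : ℝ) (ha1 : 0 < a1) (ha2 : 0 < a2) (hγ0 : 0 < γ) (hγ1 : γ < 1)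
    (hc1 : a1 - γ * a2 > 0)
    (f : ℝ × ℝ → ℝ × ℝ)
    (hf : ∀ x : ℝ × ℝ,
      f x = (2 * x.1 * a1 / (a1 + x.1 + γ * x.2),
             2 * x.2 * a2 / (a2 + γ * x.1 + x.2)))
    (ρ : ℝ) (hρ : ρ = 2 * a2 / (a2 + γ * a1))
    (g : ℝ × ℝ → ℝ × ℝ)
    (hg : ∀ x : ℝ × ℝ, g x = f (((a1 : ℝ), (0 : ℝ)) + x) - ((a1 : ℝ), (0 : ℝ)))
    (A : ℝ × ℝ →L[ℝ] ℝ × ℝ)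
    (hA : ∀ v : ℝ × ℝ, A v = ((1 / 2) * v.1 - (γ / 2) * v.2, ρ * v.2))
    (x1co x2co : ℝ)
    (h1 : x1co = (a1 - γ * a2) / (1 - γ ^ 2)) :
    ∃ (F : ℝ × ℝ → ℝ × ℝ → (ℝ × ℝ →L[ℝ] ℝ × ℝ)) (C : ℝ), 0 < C ∧
      ∀ x ∈ Set.Ici (x1co - a1) ×ˢ Set.Icc (0 : ℝ) x2co,
      ∀ y ∈ Set.Ici (x1co - a1) ×ˢ Set.Icc (0 : ℝ) x2co,
        g x - g y = A (x - y) + F x y (x - y) ∧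
        ‖F x y‖ ≤ C * max ‖x‖ ‖y‖ := by
  have hx1co : 0 < x1co := h1 ▸ div_pos hc1 (by nlinarith)
  have hD := fun x (hx : x ∈ Set.Ici (x1co - a1) ×ˢ Set.Icc (0 : ℝ) x2co) =>
    le_denominators_of_mem (a2 := a2) hγ0.le hx1co.le hx
  obtain ⟨F, C, hC, hF⟩ := exists_increment_decomposition_of_linearFractional
    (fst ℝ ℝ ℝ - γ • snd ℝ ℝ ℝ) (fst ℝ ℝ ℝ + γ • snd ℝ ℝ ℝ) (snd ℝ ℝ ℝ)
    (γ • fst ℝ ℝ ℝ + snd ℝ ℝ ℝ) ha1 ha2 (by linarith) (le_add_of_nonneg_right (by positivity))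
    (fun x hx => (hD x hx).1) (fun x hx => (hD x hx).2)
    (fun x hx => shifted_eq_linearFractional hf hg (ha1.trans_le (hD x hx).1).ne'
      (ha2.trans_le (hD x hx).2).ne')
  have hA_eq : A = ((a1 / (2 * a1)) • (fst ℝ ℝ ℝ - γ • snd ℝ ℝ ℝ)).prod
      ((2 * a2 / (a2 + γ * a1)) • snd ℝ ℝ ℝ) := by
    refine ContinuousLinearMap.ext fun v => Prod.ext ?_ ?_ <;>
      simp only [hA, hρ, prod_apply, smul_apply, sub_apply, coe_fst', coe_snd', smul_eq_mul]
    field_simp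
  exact ⟨F, C, hC, hA_eq ▸ hF⟩

/-- On `E = [x1co − a1, ∞) × [0, x2co]`, the increment of `g` satisfies
`g(x) − g(y) = (A + F(x,y))(x − y)` with `‖F(x,y)‖ ≤ C max(‖x‖, ‖y‖)`. -/
theorem g_increment_decomposition_with_F
    (a1 a2 γ : ℝ) (ha1 : 0 < a1) (ha2 : 0 < a2) (hγ0 : 0 < γ) (hγ1 : γ < 1)
    (hc1 : a1 - γ * a2 > 0) (hc2 : a2 - γ * a1 > 0)
    (f : ℝ × ℝ → ℝ × ℝ)
    (hf : ∀ x : ℝ × ℝ,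
      f x = (2 * x.1 * a1 / (a1 + x.1 + γ * x.2),
             2 * x.2 * a2 / (a2 + γ * x.1 + x.2)))
    (ρ : ℝ) (hρ : ρ = 2 * a2 / (a2 + γ * a1))
    (g : ℝ × ℝ → ℝ × ℝ)
    (hg : ∀ x : ℝ × ℝ, g x = f (((a1 : ℝ), (0 : ℝ)) + x) - ((a1 : ℝ), (0 : ℝ)))
    (A : ℝ × ℝ →L[ℝ] ℝ × ℝ)
    (hA : ∀ v : ℝ × ℝ, A v = ((1 / 2) * v.1 - (γ / 2) * v.2, ρ * v.2))
    (x1co x2co : ℝ)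
    (h1 : x1co = (a1 - γ * a2) / (1 - γ ^ 2))
    (h2 : x2co = (a2 - γ * a1) / (1 - γ ^ 2)) :
    ∃ (F : ℝ × ℝ → ℝ × ℝ → (ℝ × ℝ →L[ℝ] ℝ × ℝ)) (C : ℝ), 0 < C ∧
      ∀ x ∈ Set.Ici (x1co - a1) ×ˢ Set.Icc (0 : ℝ) x2co,
      ∀ y ∈ Set.Ici (x1co - a1) ×ˢ Set.Icc (0 : ℝ) x2co,
        g x - g y = A (x - y) + F x y (x - y) ∧
        ‖F x y‖ ≤ C * max ‖x‖ ‖y‖ :=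
  g_increment_decomposition_with_F_general a1 a2 γ ha1 ha2 hγ0 hγ1 hc1 f hf ρ hρ g hg A hA x1co x2co
    h1
end

section
/- For every x ∈ ℝ × ℝ₊ and all sufficiently large n, the iterates satisfy ‖gᵐ(x/ρⁿ)‖∞ ≤ ψ(‖x‖∞) ρ^{m−n} for m = 1,…,n, where ψ : ℝ₊ → ℝ₊ is a finite function. -/
/-!
On the half-strip `|u| ≤ a1, 0 ≤ v`, which `g` maps into itself and onto a bounded set,
`g` expands by at most `ρ` up to a quadratic error: `‖g p‖ (1 - c‖p‖) ≤ ρ ‖p‖`. Hence the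
reciprocals `y k = 1 / ‖gᵏ x₀‖` obey `y (k + 1) ≥ (y k - c) / ρ`, and comparing with the
explicit solution of this linear recurrence gives `‖gᵐ (x / ρⁿ)‖ ≤ 2 ‖x‖ ρ^(m - n)` as long
as `‖x‖ ρ^(m - n)` stays below a fixed constant. Beyond that, the boundedness of `g` on the
half-strip gives the estimate.
-/

open Set

noncomputable def recentredBareBones (a1 a2 γ : ℝ) (p : ℝ × ℝ) : ℝ × ℝ :=
  (2 * (a1 + p.1) * a1 / (2 * a1 + p.1 + γ * p.2) - a1,
    2 * p.2 * a2 / (a2 + γ * a1 + γ * p.1 + p.2))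

def halfStrip (a : ℝ) : Set (ℝ × ℝ) := {p | |p.1| ≤ a ∧ 0 ≤ p.2}

section

variable {a1 a2 γ : ℝ} {p : ℝ × ℝ}

theorem recentredBareBones_zero : recentredBareBones a1 a2 γ 0 = 0 := by
  simp only [recentredBareBones, Prod.fst_zero, Prod.snd_zero, add_zero, mul_zero, zero_mul,
    zero_div, Prod.mk_eq_zero, and_true]
  field_simp
  ring

theorem recentredBareBones_eq {f : ℝ × ℝ → ℝ × ℝ}
    (hf : ∀ x : ℝ × ℝ, f x = (2 * x.1 * a1 / (a1 + x.1 + γ * x.2),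
      2 * x.2 * a2 / (a2 + γ * x.1 + x.2))) (p : ℝ × ℝ) :
    recentredBareBones a1 a2 γ p = f ((a1, 0) + p) - (a1, 0) := by
  rw [hf]
  ext <;> simp only [recentredBareBones, Prod.fst_add, Prod.snd_add, Prod.fst_sub,
    Prod.snd_sub] <;> ring_nf

theorem neg_le_fst_of_mem_halfStrip (hp : p ∈ halfStrip a1) : -a1 ≤ p.1 :=
  (neg_le_neg hp.1).trans (neg_abs_le _)

theorem le_denom_fst_of_mem_halfStrip (hγ : 0 ≤ γ) (hp : p ∈ halfStrip a1) :
    a1 ≤ 2 * a1 + p.1 + γ * p.2 := by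
  linarith [neg_le_fst_of_mem_halfStrip hp, mul_nonneg hγ hp.2]

theorem le_denom_snd_of_mem_halfStrip (hγ : 0 ≤ γ) (hp : p ∈ halfStrip a1) :
    a2 ≤ a2 + γ * a1 + γ * p.1 + p.2 := by
  nlinarith [mul_nonneg hγ (neg_le_iff_add_nonneg.1 (neg_le_fst_of_mem_halfStrip hp)), hp.2]

theorem abs_fst_recentredBareBones_le (ha1 : 0 < a1) (hγ : 0 ≤ γ) (hp : p ∈ halfStrip a1) :
    |(recentredBareBones a1 a2 γ p).1| ≤ a1 := by
  have hD := le_denom_fst_of_mem_halfStrip hγ hp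
  have hu := neg_le_fst_of_mem_halfStrip hp
  rw [recentredBareBones, abs_sub_le_iff, sub_le_iff_le_add, div_le_iff₀ (by linarith)]
  refine ⟨by nlinarith [mul_nonneg hγ hp.2], ?_⟩
  have : 0 ≤ 2 * (a1 + p.1) * a1 / (2 * a1 + p.1 + γ * p.2) :=
    div_nonneg (by nlinarith) (by linarith)
  linarith

theorem snd_recentredBareBones_mem_Icc (ha2 : 0 < a2) (hγ : 0 ≤ γ) (hp : p ∈ halfStrip a1) :
    (recentredBareBones a1 a2 γ p).2 ∈ Icc 0 (2 * a2) := by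
  have hD := le_denom_snd_of_mem_halfStrip (a2 := a2) hγ hp
  refine ⟨div_nonneg (by nlinarith [hp.2]) (by linarith), ?_⟩
  have hv : p.2 ≤ a2 + γ * a1 + γ * p.1 + p.2 := by
    nlinarith [mul_nonneg hγ (neg_le_iff_add_nonneg.1 (neg_le_fst_of_mem_halfStrip hp))]
  rw [recentredBareBones, div_le_iff₀ (by linarith)]
  nlinarith

theorem smul_mem_halfStrip {a t : ℝ} {x : ℝ × ℝ} (ht : 0 ≤ t) (hx : 0 ≤ x.2)
    (h : t * ‖x‖ ≤ a) : t • x ∈ halfStrip a := by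
  refine ⟨?_, mul_nonneg ht hx⟩
  rw [Prod.smul_fst, smul_eq_mul, abs_mul, abs_of_nonneg ht]
  exact (mul_le_mul_of_nonneg_left (norm_fst_le x) ht).trans h

theorem eventually_inv_pow_smul_mem_halfStrip {ρ : ℝ} {x : ℝ × ℝ} (ha1 : 0 < a1) (hρ : 1 < ρ)
    (hx : 0 ≤ x.2) : ∀ᶠ n in Filter.atTop, (ρ ^ n)⁻¹ • x ∈ halfStrip a1 := by
  filter_upwards [(tendsto_pow_atTop_atTop_of_one_lt hρ).eventually_ge_atTop (‖x‖ / a1)]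
    with n hn
  refine smul_mem_halfStrip (by positivity) hx ?_
  rw [inv_mul_le_iff₀ (by positivity)]
  exact (div_le_iff₀ ha1).1 hn

theorem mapsTo_recentredBareBones (ha1 : 0 < a1) (ha2 : 0 < a2) (hγ : 0 ≤ γ) :
    MapsTo (recentredBareBones a1 a2 γ) (halfStrip a1) (halfStrip a1) := fun _ hp =>
  ⟨abs_fst_recentredBareBones_le ha1 hγ hp, (snd_recentredBareBones_mem_Icc ha2 hγ hp).1⟩

theorem norm_recentredBareBones_le (ha1 : 0 < a1) (ha2 : 0 < a2) (hγ : 0 ≤ γ)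
    (hp : p ∈ halfStrip a1) : ‖recentredBareBones a1 a2 γ p‖ ≤ max a1 (2 * a2) := by
  obtain ⟨h0, h2⟩ := snd_recentredBareBones_mem_Icc ha2 hγ hp
  rw [Prod.norm_def, Real.norm_eq_abs, Real.norm_eq_abs, abs_of_nonneg h0]
  exact max_le_max (abs_fst_recentredBareBones_le ha1 hγ hp) h2

theorem abs_fst_recentredBareBones_mul_le (ha1 : 0 < a1) (hγ0 : 0 ≤ γ) (hγ1 : γ ≤ 1)
    (hp : p ∈ halfStrip a1) : |(recentredBareBones a1 a2 γ p).1| * (1 - ‖p‖ / a1) ≤ ‖p‖ := by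
  have hD : 0 < 2 * a1 + p.1 + γ * p.2 :=
    ha1.trans_le (le_denom_fst_of_mem_halfStrip hγ0 hp)
  have hu : |p.1| ≤ ‖p‖ := norm_fst_le p
  have hv : p.2 ≤ ‖p‖ := (le_abs_self _).trans (norm_snd_le p)
  have hfst : (recentredBareBones a1 a2 γ p).1 =
      a1 * (p.1 - γ * p.2) / (2 * a1 + p.1 + γ * p.2) := by
    rw [recentredBareBones, div_sub' hD.ne']; ring_nf
  have hnum : |p.1 - γ * p.2| ≤ (1 + γ) * ‖p‖ := by
    rw [abs_le]
    constructor <;> nlinarith [abs_le.1 hu, hp.2, mul_le_mul_of_nonneg_left hv hγ0,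
      mul_nonneg hγ0 hp.2]
  rw [hfst, abs_div, abs_mul, abs_of_pos ha1, abs_of_pos hD, div_mul_eq_mul_div,
    div_le_iff₀ hD]
  have hw0 : 0 ≤ ‖p‖ := norm_nonneg p
  have hD' : 2 * a1 - ‖p‖ ≤ 2 * a1 + p.1 + γ * p.2 := by
    nlinarith [abs_le.1 hu, mul_nonneg hγ0 hp.2]
  have hlhs : a1 * |p.1 - γ * p.2| * (1 - ‖p‖ / a1) = |p.1 - γ * p.2| * (a1 - ‖p‖) := by
    field_simp
  rw [hlhs]
  rcases le_or_gt ‖p‖ a1 with hw | hw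
  · calc |p.1 - γ * p.2| * (a1 - ‖p‖) ≤ (1 + γ) * ‖p‖ * (a1 - ‖p‖) := by gcongr
      _ ≤ ‖p‖ * (2 * a1 - ‖p‖) := by
        nlinarith [mul_nonneg hw0 (mul_nonneg (sub_nonneg.2 hγ1) ha1.le),
          mul_nonneg hw0 (mul_nonneg hγ0 hw0)]
      _ ≤ ‖p‖ * (2 * a1 + p.1 + γ * p.2) := by gcongr
  · nlinarith [mul_nonneg (abs_nonneg (p.1 - γ * p.2)) (sub_nonneg.2 hw.le),
      mul_nonneg hw0 hD.le]

theorem snd_recentredBareBones_mul_le (ha2 : 0 < a2) (hγ0 : 0 ≤ γ) (hp : p ∈ halfStrip a1) :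
    (recentredBareBones a1 a2 γ p).2 * (1 - γ * ‖p‖ / (a2 + γ * a1)) ≤
      2 * a2 / (a2 + γ * a1) * ‖p‖ := by
  have hD : 0 < a2 + γ * a1 + γ * p.1 + p.2 :=
    ha2.trans_le (le_denom_snd_of_mem_halfStrip hγ0 hp)
  have hs : 0 < a2 + γ * a1 := by nlinarith [mul_nonneg hγ0 ((abs_nonneg _).trans hp.1)]
  have hu : -‖p‖ ≤ p.1 := (neg_le_neg (norm_fst_le p)).trans (neg_abs_le _)
  have hv : p.2 ≤ ‖p‖ := (le_abs_self _).trans (norm_snd_le p)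
  have key : p.2 * (a2 + γ * a1 - γ * ‖p‖) ≤ ‖p‖ * (a2 + γ * a1 + γ * p.1 + p.2) := by
    rcases le_or_gt (γ * ‖p‖) (a2 + γ * a1) with hw | hw
    · nlinarith [mul_le_mul_of_nonneg_right hv (sub_nonneg.2 hw),
        mul_le_mul_of_nonneg_left (mul_le_mul_of_nonneg_left hu hγ0) (norm_nonneg p),
        mul_nonneg hp.2 (hp.2.trans hv)]
    · nlinarith [mul_nonneg hp.2 (sub_nonneg.2 hw.le), mul_nonneg (hp.2.trans hv) hD.le]
  calc (recentredBareBones a1 a2 γ p).2 * (1 - γ * ‖p‖ / (a2 + γ * a1))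
      = 2 * a2 / (a2 + γ * a1) *
          (p.2 * (a2 + γ * a1 - γ * ‖p‖) / (a2 + γ * a1 + γ * p.1 + p.2)) := by
        rw [recentredBareBones]; field_simp
    _ ≤ 2 * a2 / (a2 + γ * a1) * ‖p‖ := by
        gcongr
        exact (div_le_iff₀ hD).2 key

theorem norm_recentredBareBones_mul_le (ha1 : 0 < a1) (ha2 : 0 < a2) (hγ0 : 0 ≤ γ)
    (hγ1 : γ ≤ 1) (hγa : γ * a1 ≤ a2) (hp : p ∈ halfStrip a1) :
    ‖recentredBareBones a1 a2 γ p‖ * (1 - (1 / a1 + γ / (a2 + γ * a1)) * ‖p‖) ≤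
      2 * a2 / (a2 + γ * a1) * ‖p‖ := by
  have hs : 0 < a2 + γ * a1 := by nlinarith [mul_nonneg hγ0 ha1.le]
  have hρ : 1 ≤ 2 * a2 / (a2 + γ * a1) := (one_le_div hs).2 (by linarith)
  have hw0 : 0 ≤ ‖p‖ := norm_nonneg p
  have ht1 : 1 - (1 / a1 + γ / (a2 + γ * a1)) * ‖p‖ ≤ 1 - ‖p‖ / a1 := by
    have : 0 ≤ γ / (a2 + γ * a1) * ‖p‖ := by positivity
    linarith [one_div_mul_eq_div a1 ‖p‖]
  have ht2 :
      1 - (1 / a1 + γ / (a2 + γ * a1)) * ‖p‖ ≤ 1 - γ * ‖p‖ / (a2 + γ * a1) := by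
    have : 0 ≤ 1 / a1 * ‖p‖ := by positivity
    linarith [mul_div_right_comm γ ‖p‖ (a2 + γ * a1)]
  rcases le_or_gt (1 - (1 / a1 + γ / (a2 + γ * a1)) * ‖p‖) 0 with ht | ht
  · nlinarith [mul_nonpos_of_nonneg_of_nonpos (norm_nonneg (recentredBareBones a1 a2 γ p)) ht]
  obtain ⟨h2, -⟩ := snd_recentredBareBones_mem_Icc ha2 hγ0 hp
  rw [Prod.norm_def, Real.norm_eq_abs, Real.norm_eq_abs, abs_of_nonneg h2,
    max_mul_of_nonneg _ _ ht.le]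
  refine max_le ?_ ?_
  · calc |(recentredBareBones a1 a2 γ p).1| * (1 - (1 / a1 + γ / (a2 + γ * a1)) * ‖p‖)
        ≤ |(recentredBareBones a1 a2 γ p).1| * (1 - ‖p‖ / a1) := by gcongr
      _ ≤ ‖p‖ := abs_fst_recentredBareBones_mul_le ha1 hγ0 hγ1 hp
      _ ≤ 2 * a2 / (a2 + γ * a1) * ‖p‖ := le_mul_of_one_le_left hw0 hρ
  · calc (recentredBareBones a1 a2 γ p).2 * (1 - (1 / a1 + γ / (a2 + γ * a1)) * ‖p‖)
        ≤ (recentredBareBones a1 a2 γ p).2 * (1 - γ * ‖p‖ / (a2 + γ * a1)) := by gcongr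
      _ ≤ 2 * a2 / (a2 + γ * a1) * ‖p‖ := snd_recentredBareBones_mul_le ha2 hγ0 hp

end

section Recurrence

variable {ρ c : ℝ} {w : ℕ → ℝ}

-- `Φ k` is a lower bound for `1 / w k`, which satisfies `1 / w (k + 1) ≥ (1 / w k - c) / ρ`.
theorem mul_le_one_of_recurrence {Φ : ℕ → ℝ} (hρ : 0 < ρ) (hc : 0 ≤ c) (hw : ∀ k, 0 ≤ w k)
    (hstep : ∀ k, w (k + 1) * (1 - c * w k) ≤ ρ * w k) (hΦ : ∀ k, ρ * Φ (k + 1) + c = Φ k)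
    (h0 : w 0 * Φ 0 ≤ 1) : ∀ k, c < Φ k → w k * Φ k ≤ 1
  | 0, _ => h0
  | k + 1, hk => by
    have hΦk : c < Φ k := by nlinarith [hΦ k]
    have ih := mul_le_one_of_recurrence hρ hc hw hstep hΦ h0 k hΦk
    have hcw : 0 < 1 - c * w k := by nlinarith [hw k]
    have hmul := mul_le_mul_of_nonneg_right (hstep k) (hc.trans hk.le)
    refine le_of_mul_le_mul_right ?_ hcw
    nlinarith [hΦ k]

theorem le_two_mul_zpow_of_recurrence {r : ℝ} (hρ : 1 < ρ) (hc : 0 ≤ c) (hr : 0 < r)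
    (hw : ∀ k, 0 ≤ w k) (hstep : ∀ k, w (k + 1) * (1 - c * w k) ≤ ρ * w k) {n m : ℕ}
    (hw0 : w 0 ≤ r * (ρ ^ n)⁻¹) (hsmall : 2 * c * ρ / (ρ - 1) * r * ρ ^ ((m : ℤ) - n) < 1) :
    w m ≤ 2 * r * ρ ^ ((m : ℤ) - n) := by
  have hρ0 : 0 < ρ := one_pos.trans hρ
  have hρ1 : 0 < ρ - 1 := sub_pos.2 hρ
  set A := c / (ρ - 1) with hA
  have hA0 : 0 ≤ A := div_nonneg hc hρ1.le
  set q : ℝ := ρ ^ ((m : ℤ) - n) with hq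
  have hrq : 0 < r * q := mul_pos hr (zpow_pos hρ0 _)
  -- `-A` is the fixed point of `Φ ↦ (Φ - c) / ρ`
  have hΦ (k : ℕ) : ρ * ((ρ⁻¹) ^ (k + 1) * (ρ ^ n / r + A) - A) + c =
      (ρ⁻¹) ^ k * (ρ ^ n / r + A) - A := by
    rw [hA, pow_succ]
    field_simp
    ring
  have h0 : w 0 * ((ρ⁻¹) ^ 0 * (ρ ^ n / r + A) - A) ≤ 1 :=
    calc w 0 * ((ρ⁻¹) ^ 0 * (ρ ^ n / r + A) - A) = w 0 * (ρ ^ n / r) := by ring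
      _ ≤ r * (ρ ^ n)⁻¹ * (ρ ^ n / r) := by gcongr
      _ = 1 := by field_simp
  have hΦm : 1 / (r * q) - A ≤ (ρ⁻¹) ^ m * (ρ ^ n / r + A) - A := by
    have hqm : (ρ⁻¹) ^ m * ρ ^ n / r = 1 / (r * q) := by
      rw [hq, zpow_sub₀ hρ0.ne', zpow_natCast, zpow_natCast, inv_pow]
      field_simp
    have : 0 ≤ (ρ⁻¹) ^ m * A := by positivity
    rw [mul_add, ← mul_div_assoc, hqm]
    linarith
  have hu : 2 * (A + c) < 1 / (r * q) := by
    have hK : 2 * c * ρ / (ρ - 1) = 2 * (A + c) := by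
      rw [hA]; field_simp; ring
    rw [lt_div_iff₀ hrq, ← mul_assoc, ← hK]
    exact hsmall
  have key := mul_le_one_of_recurrence (Φ := fun k => (ρ⁻¹) ^ k * (ρ ^ n / r + A) - A)
    hρ0 hc hw hstep hΦ h0 m (by linarith)
  have hwm : w m / (r * q) ≤ 2 := by
    rw [div_eq_mul_one_div]
    nlinarith [hw m]
  rw [mul_assoc]
  exact (div_le_iff₀ hrq).1 hwm

theorem le_mul_zpow_of_recurrence {B r : ℝ} (hρ : 1 < ρ) (hc : 0 ≤ c) (hB : 0 ≤ B)
    (hr : 0 < r) (hw : ∀ k, 0 ≤ w k) (hstep : ∀ k, w (k + 1) * (1 - c * w k) ≤ ρ * w k) {n m : ℕ}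
    (hw0 : w 0 ≤ r * (ρ ^ n)⁻¹) (hwm : w m ≤ B) :
    w m ≤ (2 + B * (2 * c * ρ / (ρ - 1))) * r * ρ ^ ((m : ℤ) - n) := by
  have hK : 0 ≤ 2 * c * ρ / (ρ - 1) * r * ρ ^ ((m : ℤ) - n) := by
    have := one_pos.trans hρ
    positivity
  rcases lt_or_ge (2 * c * ρ / (ρ - 1) * r * ρ ^ ((m : ℤ) - n)) 1 with hsmall | hlarge
  · calc w m ≤ 2 * r * ρ ^ ((m : ℤ) - n) :=
          le_two_mul_zpow_of_recurrence hρ hc hr hw hstep hw0 hsmall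
      _ ≤ (2 + B * (2 * c * ρ / (ρ - 1))) * r * ρ ^ ((m : ℤ) - n) := by
          nlinarith [mul_nonneg hB hK]
  · calc w m ≤ B := hwm
      _ ≤ B * (2 * c * ρ / (ρ - 1) * r * ρ ^ ((m : ℤ) - n)) :=
          le_mul_of_one_le_right hB hlarge
      _ ≤ (2 + B * (2 * c * ρ / (ρ - 1))) * r * ρ ^ ((m : ℤ) - n) := by
          nlinarith [zpow_pos (one_pos.trans hρ) ((m : ℤ) - n)]

end Recurrence

theorem growth_estimate_for_g_iterates_general
    (a1 a2 γ : ℝ) (ha1 : 0 < a1) (ha2 : 0 < a2) (hγ0 : 0 < γ) (hγ1 : γ < 1)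
    (hc2 : a2 - γ * a1 > 0)
    (f : ℝ × ℝ → ℝ × ℝ)
    (hf : ∀ x : ℝ × ℝ,
      f x = (2 * x.1 * a1 / (a1 + x.1 + γ * x.2),
             2 * x.2 * a2 / (a2 + γ * x.1 + x.2)))
    (ρ : ℝ) (hρ : ρ = 2 * a2 / (a2 + γ * a1))
    (g : ℝ × ℝ → ℝ × ℝ)
    (hg : ∀ x : ℝ × ℝ, g x = f (((a1 : ℝ), (0 : ℝ)) + x) - ((a1 : ℝ), (0 : ℝ))) :
    ∃ ψ : ℝ → ℝ, (∀ r, 0 ≤ r → 0 ≤ ψ r) ∧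
      ∀ x : ℝ × ℝ, 0 ≤ x.2 → ∃ N : ℕ, ∀ n ≥ N, ∀ m : ℕ, 1 ≤ m → m ≤ n →
        ‖g^[m] ((ρ ^ n)⁻¹ • x)‖ ≤ ψ ‖x‖ * ρ ^ ((m : ℤ) - (n : ℤ)) := by
  obtain rfl : g = recentredBareBones a1 a2 γ :=
    funext fun p => (hg p).trans (recentredBareBones_eq hf p).symm
  have hρ1 : 1 < ρ := hρ ▸ (one_lt_div (by positivity)).2 (by linarith)
  set c := 1 / a1 + γ / (a2 + γ * a1)
  set B := max a1 (2 * a2)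
  refine ⟨fun r => (2 + B * (2 * c * ρ / (ρ - 1))) * r, fun r hr => by positivity,
    fun x hx => ?_⟩
  rcases eq_or_ne x 0 with rfl | hx0
  · exact ⟨0, fun n _ m _ _ => by simp [Function.iterate_fixed recentredBareBones_zero]⟩
  obtain ⟨N, hN⟩ := Filter.eventually_atTop.1 (eventually_inv_pow_smul_mem_halfStrip ha1 hρ1 hx)
  refine ⟨N, fun n hn m hm1 _ => ?_⟩
  have hiter (k : ℕ) : (recentredBareBones a1 a2 γ)^[k] ((ρ ^ n)⁻¹ • x) ∈ halfStrip a1 :=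
    (mapsTo_recentredBareBones ha1 ha2 hγ0.le).iterate k (hN n hn)
  obtain ⟨j, rfl⟩ := Nat.exists_eq_add_of_le' hm1
  refine le_mul_zpow_of_recurrence
    (w := fun k => ‖(recentredBareBones a1 a2 γ)^[k] ((ρ ^ n)⁻¹ • x)‖) hρ1 (by positivity)
    (by positivity) (norm_pos_iff.2 hx0) (fun k => norm_nonneg _) (fun k => ?_) ?_ ?_
  · rw [Function.iterate_succ_apply']
    simpa only [← hρ] using
      norm_recentredBareBones_mul_le ha1 ha2 hγ0.le hγ1.le (by linarith) (hiter k)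
  · rw [Function.iterate_zero_apply, norm_smul, norm_inv, norm_pow,
      Real.norm_of_nonneg (by linarith), mul_comm]
  · rw [Function.iterate_succ_apply']
    exact norm_recentredBareBones_le ha1 ha2 hγ0.le (hiter j)

/-- Growth estimate for the iterates of `g` started at `x/ρⁿ`:
`‖gᵐ(x/ρⁿ)‖ ≤ ψ(‖x‖) ρ^{m−n}` for `m = 1,…,n` and all large `n`. -/
theorem growth_estimate_for_g_iterates
    (a1 a2 γ : ℝ) (ha1 : 0 < a1) (ha2 : 0 < a2) (hγ0 : 0 < γ) (hγ1 : γ < 1)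
    (hc1 : a1 - γ * a2 > 0) (hc2 : a2 - γ * a1 > 0)
    (f : ℝ × ℝ → ℝ × ℝ)
    (hf : ∀ x : ℝ × ℝ,
      f x = (2 * x.1 * a1 / (a1 + x.1 + γ * x.2),
             2 * x.2 * a2 / (a2 + γ * x.1 + x.2)))
    (ρ : ℝ) (hρ : ρ = 2 * a2 / (a2 + γ * a1))
    (g : ℝ × ℝ → ℝ × ℝ)
    (hg : ∀ x : ℝ × ℝ, g x = f (((a1 : ℝ), (0 : ℝ)) + x) - ((a1 : ℝ), (0 : ℝ))) :
    ∃ ψ : ℝ → ℝ, (∀ r, 0 ≤ r → 0 ≤ ψ r) ∧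
      ∀ x : ℝ × ℝ, 0 ≤ x.2 → ∃ N : ℕ, ∀ n ≥ N, ∀ m : ℕ, 1 ≤ m → m ≤ n →
        ‖g^[m] ((ρ ^ n)⁻¹ • x)‖ ≤ ψ ‖x‖ * ρ ^ ((m : ℤ) - (n : ℤ)) :=
  growth_estimate_for_g_iterates_general a1 a2 γ ha1 ha2 hγ0 hγ1 hc2 f hf ρ hρ g hg
end

section
/- The limit function H(x) = lim_n fⁿ(x^re + x/ρⁿ) satisfies the Abel-type functional equation H(x) = f(H(x/ρ)) for all x ∈ ℝ × ℝ₊, together with H(0) = x^re. -/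
open Filter Topology

/-- The limit function `H` satisfies the Abel-type equation `H(x) = f(H(x/ρ))`
on `ℝ × ℝ₊`, together with `H(0) = x^re`. -/
theorem H_satisfies_abel_equation
    (a1 a2 γ : ℝ) (ha1 : 0 < a1) (ha2 : 0 < a2) (hγ0 : 0 < γ) (hγ1 : γ < 1)
    (hc1 : a1 - γ * a2 > 0) (hc2 : a2 - γ * a1 > 0)
    (f : ℝ × ℝ → ℝ × ℝ)
    (hf : ∀ x : ℝ × ℝ,
      f x = (2 * x.1 * a1 / (a1 + x.1 + γ * x.2),
             2 * x.2 * a2 / (a2 + γ * x.1 + x.2)))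
    (ρ : ℝ) (hρ : ρ = 2 * a2 / (a2 + γ * a1))
    (H : ℝ × ℝ → ℝ × ℝ)
    (hH : ∀ x : ℝ × ℝ, 0 ≤ x.2 →
      Tendsto (fun n : ℕ => f^[n] (((a1 : ℝ), (0 : ℝ)) + (ρ ^ n)⁻¹ • x))
        atTop (𝓝 (H x))) :
    (∀ x : ℝ × ℝ, 0 ≤ x.2 → H x = f (H (ρ⁻¹ • x))) ∧
    H 0 = ((a1 : ℝ), (0 : ℝ)) := by
  have hden : 0 < a2 + γ * a1 := by nlinarith
  have hρ1 : 1 < ρ := by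
    rw [hρ, lt_div_iff₀ hden]; nlinarith
  have hρ0 : 0 < ρ := lt_trans one_pos hρ1
  -- forward invariance of the quadrant {u > 0, v ≥ 0}
  have hinv : ∀ p : ℝ × ℝ, 0 < p.1 → 0 ≤ p.2 → 0 < (f p).1 ∧ 0 ≤ (f p).2 := by
    intro p h1 h2
    rw [hf]
    constructor
    · exact div_pos (by positivity) (by nlinarith)
    · exact div_nonneg (by positivity) (by nlinarith)
  have hiter : ∀ n : ℕ, ∀ p : ℝ × ℝ, 0 < p.1 → 0 ≤ p.2 →
      0 < (f^[n] p).1 ∧ 0 ≤ (f^[n] p).2 := by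
    intro n
    induction n with
    | zero => intro p h1 h2; exact ⟨h1, h2⟩
    | succ n ih =>
      intro p h1 h2
      rw [Function.iterate_succ_apply]
      exact ih _ (hinv p h1 h2).1 (hinv p h1 h2).2
  -- fixed point
  have hfix : f ((a1 : ℝ), (0 : ℝ)) = ((a1 : ℝ), (0 : ℝ)) := by
    rw [hf]
    simp only [mul_zero, add_zero, zero_mul, zero_div]
    refine Prod.ext ?_ rfl
    show 2 * a1 * a1 / (a1 + a1) = a1
    rw [div_eq_iff (by positivity)]
    ring
  have hH0 : H 0 = ((a1 : ℝ), (0 : ℝ)) := by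
    have h := hH 0 le_rfl
    have heq : (fun n : ℕ => f^[n] (((a1 : ℝ), (0 : ℝ)) + (ρ ^ n)⁻¹ • (0 : ℝ × ℝ)))
        = fun _ : ℕ => ((a1 : ℝ), (0 : ℝ)) := by
      funext n
      rw [smul_zero, add_zero, Function.iterate_fixed hfix]
    rw [heq] at h
    exact tendsto_nhds_unique (tendsto_const_nhds) h |>.symm
  refine ⟨?_, hH0⟩
  intro x hx
  set L := H (ρ⁻¹ • x) with hL
  have hx2 : (0 : ℝ) ≤ (ρ⁻¹ • x).2 := by
    have : (ρ⁻¹ • x).2 = ρ⁻¹ * x.2 := rfl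
    rw [this]; positivity
  have haL : Tendsto (fun n : ℕ => f^[n] (((a1 : ℝ), (0 : ℝ)) + (ρ ^ n)⁻¹ • (ρ⁻¹ • x)))
      atTop (𝓝 L) := hH _ hx2
  -- the scaled starting points
  have hp1 : ∀ n : ℕ, (((a1 : ℝ), (0 : ℝ)) + (ρ ^ n)⁻¹ • (ρ⁻¹ • x)).1
      = a1 + (ρ ^ n)⁻¹ * (ρ⁻¹ * x.1) := by intro n; rfl
  have hp2 : ∀ n : ℕ, (((a1 : ℝ), (0 : ℝ)) + (ρ ^ n)⁻¹ • (ρ⁻¹ • x)).2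
      = (ρ ^ n)⁻¹ * (ρ⁻¹ * x.2) := by
    intro n
    show (0 : ℝ) + (ρ ^ n)⁻¹ * (ρ⁻¹ * x.2) = _
    ring
  have htend0 : Tendsto (fun n : ℕ => (ρ ^ n)⁻¹ * (ρ⁻¹ * x.1)) atTop (𝓝 0) := by
    have h1 : Tendsto (fun n : ℕ => (ρ ^ n)⁻¹) atTop (𝓝 0) :=
      tendsto_inv_atTop_zero.comp (tendsto_pow_atTop_atTop_of_one_lt hρ1)
    simpa using h1.mul_const (ρ⁻¹ * x.1)
  have hev : ∀ᶠ n : ℕ in atTop, 0 < a1 + (ρ ^ n)⁻¹ * (ρ⁻¹ * x.1) := by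
    have : Tendsto (fun n : ℕ => a1 + (ρ ^ n)⁻¹ * (ρ⁻¹ * x.1)) atTop (𝓝 a1) := by
      simpa using (tendsto_const_nhds (x := a1) (f := atTop)).add htend0
    exact this.eventually (eventually_gt_nhds ha1)
  have hevQ : ∀ᶠ n : ℕ in atTop,
      0 ≤ (f^[n] (((a1 : ℝ), (0 : ℝ)) + (ρ ^ n)⁻¹ • (ρ⁻¹ • x))).1 ∧
      0 ≤ (f^[n] (((a1 : ℝ), (0 : ℝ)) + (ρ ^ n)⁻¹ • (ρ⁻¹ • x))).2 := by
    filter_upwards [hev] with n hn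
    have h2 : (0 : ℝ) ≤ (((a1 : ℝ), (0 : ℝ)) + (ρ ^ n)⁻¹ • (ρ⁻¹ • x)).2 := by
      rw [hp2]; positivity
    have h1 : (0 : ℝ) < (((a1 : ℝ), (0 : ℝ)) + (ρ ^ n)⁻¹ • (ρ⁻¹ • x)).1 := by
      rw [hp1]; exact hn
    exact ⟨(hiter n _ h1 h2).1.le, (hiter n _ h1 h2).2⟩
  have hL1 : 0 ≤ L.1 :=
    ge_of_tendsto ((continuous_fst.tendsto L).comp haL) (hevQ.mono fun n h => h.1)
  have hL2 : 0 ≤ L.2 :=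
    ge_of_tendsto ((continuous_snd.tendsto L).comp haL) (hevQ.mono fun n h => h.2)
  -- continuity of f at L
  have hd1 : a1 + L.1 + γ * L.2 ≠ 0 := by positivity
  have hd2 : a2 + γ * L.1 + L.2 ≠ 0 := by positivity
  have hcont : ContinuousAt f L := by
    have hfe : f = fun p : ℝ × ℝ =>
        (2 * p.1 * a1 / (a1 + p.1 + γ * p.2), 2 * p.2 * a2 / (a2 + γ * p.1 + p.2)) :=
      funext hf
    rw [hfe]
    apply ContinuousAt.prodMk
    · exact ContinuousAt.div (by fun_prop) (by fun_prop) hd1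
    · exact ContinuousAt.div (by fun_prop) (by fun_prop) hd2
  have ht1 : Tendsto (fun n : ℕ =>
      f (f^[n] (((a1 : ℝ), (0 : ℝ)) + (ρ ^ n)⁻¹ • (ρ⁻¹ • x)))) atTop (𝓝 (f L)) :=
    (hcont.tendsto).comp haL
  -- this is the shifted sequence for x
  have heq : (fun n : ℕ => f (f^[n] (((a1 : ℝ), (0 : ℝ)) + (ρ ^ n)⁻¹ • (ρ⁻¹ • x))))
      = fun n : ℕ => f^[n + 1] (((a1 : ℝ), (0 : ℝ)) + (ρ ^ (n + 1))⁻¹ • x) := by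
    funext n
    rw [Function.iterate_succ_apply']
    congr 2
    rw [smul_smul]
    congr 1
    rw [pow_succ, mul_inv]
  have ht2 : Tendsto (fun n : ℕ =>
      f^[n + 1] (((a1 : ℝ), (0 : ℝ)) + (ρ ^ (n + 1))⁻¹ • x)) atTop (𝓝 (H x)) :=
    (hH x hx).comp (tendsto_add_atTop_nat 1)
  rw [heq] at ht1
  exact tendsto_nhds_unique ht2 ht1
end

section
/- The supremum over the nonnegative quadrant of the ℓ∞ operator norm of the Jacobian Df(x) of the bare bones map f is at most 2; consequently f is Lipschitz on ℝ₊² with Lipschitz constant at most 2 in the ℓ∞ norm. -/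
/-!
Each coordinate of the bare bones map has the form `2ua / D` with `D = a + u + γv`. Its
gradient has `ℓ¹` norm `2a(a + γ(u + v)) / D² ≤ 2aD / D² ≤ 2` on the quadrant, because
`γ ≤ 1` and `a ≤ D`. The `ℓ∞` operator norm of the Jacobian is the larger of its two row
sums, hence at most `2`, and the mean value inequality on the convex quadrant gives the
Lipschitz bound.
-/

open ContinuousLinearMap

noncomputable def bareBonesCoord (a γ u v : ℝ) : ℝ := 2 * u * a / (a + u + γ * v)

noncomputable def bareBones (a1 a2 γ : ℝ) (x : ℝ × ℝ) : ℝ × ℝ :=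
  (bareBonesCoord a1 γ x.1 x.2, bareBonesCoord a2 γ x.2 x.1)

theorem hasFDerivAt_bareBonesCoord {E : Type*} [NormedAddCommGroup E] [NormedSpace ℝ E]
    {u v : E → ℝ} {u' v' : E →L[ℝ] ℝ} {x : E} {a γ : ℝ}
    (hu : HasFDerivAt u u' x) (hv : HasFDerivAt v v' x) (hD : a + u x + γ * v x ≠ 0) :
    HasFDerivAt (fun y => bareBonesCoord a γ (u y) (v y))
      ((2 * a * (a + γ * v x) / (a + u x + γ * v x) ^ 2) • u' +
        (-(2 * a * γ * u x) / (a + u x + γ * v x) ^ 2) • v') x := by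
  have hnum : HasFDerivAt (fun y => 2 * u y * a) ((2 * a) • u') x :=
    ((hu.const_mul 2).mul_const a).congr_fderiv (by rw [smul_smul, mul_comm])
  have hinv := (hasDerivAt_inv hD).comp_hasFDerivAt x
    (((hasFDerivAt_const a x).add hu).add (hv.const_mul γ))
  simp only [bareBonesCoord, div_eq_mul_inv]
  refine (hnum.mul hinv).congr_fderiv ?_
  ext y
  simp only [zero_add, smul_add, Function.comp_apply, Pi.add_apply, add_apply, smul_apply,
    smul_eq_mul]
  field_simp
  ring

theorem norm_smul_add_smul_le {𝕜 E F : Type*} [NontriviallyNormedField 𝕜]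
    [SeminormedAddCommGroup E] [NormedSpace 𝕜 E]
    [SeminormedAddCommGroup F] [NormedSpace 𝕜 F]
    {L₁ L₂ : E →L[𝕜] F} (h₁ : ‖L₁‖ ≤ 1) (h₂ : ‖L₂‖ ≤ 1) (c₁ c₂ : 𝕜) :
    ‖c₁ • L₁ + c₂ • L₂‖ ≤ ‖c₁‖ + ‖c₂‖ :=
  calc ‖c₁ • L₁ + c₂ • L₂‖ ≤ ‖c₁‖ * ‖L₁‖ + ‖c₂‖ * ‖L₂‖ :=
        (norm_add_le _ _).trans (add_le_add (norm_smul_le c₁ L₁) (norm_smul_le c₂ L₂))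
    _ ≤ ‖c₁‖ * 1 + ‖c₂‖ * 1 := by gcongr
    _ = ‖c₁‖ + ‖c₂‖ := by simp

theorem bareBonesCoord_partials_abs_add_le_two {a γ u v : ℝ} (ha : 0 < a) (hu : 0 ≤ u)
    (hv : 0 ≤ v) (hγ0 : 0 ≤ γ) (hγ1 : γ ≤ 1) :
    |2 * a * (a + γ * v) / (a + u + γ * v) ^ 2| +
      |-(2 * a * γ * u) / (a + u + γ * v) ^ 2| ≤ 2 := by
  have hD : 0 < a + u + γ * v := by positivity
  rw [abs_of_nonneg (by positivity), abs_div, abs_neg, abs_of_nonneg (by positivity),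
    abs_of_nonneg (by positivity), ← add_div]
  calc (2 * a * (a + γ * v) + 2 * a * γ * u) / (a + u + γ * v) ^ 2
      ≤ 2 * a * (a + u + γ * v) / (a + u + γ * v) ^ 2 := by
        gcongr; linarith [mul_nonneg (mul_nonneg ha.le hu) (sub_nonneg.2 hγ1)]
    _ = 2 * a / (a + u + γ * v) := by field_simp
    _ ≤ 2 := by rw [div_le_iff₀ hD]; linarith [mul_nonneg hγ0 hv]

section bareBones

variable {a1 a2 γ : ℝ}

theorem hasFDerivAt_bareBones (ha1 : 0 < a1) (ha2 : 0 < a2) (hγ0 : 0 ≤ γ) {x : ℝ × ℝ}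
    (hx1 : 0 ≤ x.1) (hx2 : 0 ≤ x.2) :
    HasFDerivAt (bareBones a1 a2 γ)
      (((2 * a1 * (a1 + γ * x.2) / (a1 + x.1 + γ * x.2) ^ 2) • fst ℝ ℝ ℝ +
          (-(2 * a1 * γ * x.1) / (a1 + x.1 + γ * x.2) ^ 2) • snd ℝ ℝ ℝ).prod
        ((2 * a2 * (a2 + γ * x.1) / (a2 + x.2 + γ * x.1) ^ 2) • snd ℝ ℝ ℝ +
          (-(2 * a2 * γ * x.2) / (a2 + x.2 + γ * x.1) ^ 2) • fst ℝ ℝ ℝ)) x :=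
  (hasFDerivAt_bareBonesCoord hasFDerivAt_fst hasFDerivAt_snd (by positivity)).prodMk
    (hasFDerivAt_bareBonesCoord hasFDerivAt_snd hasFDerivAt_fst (by positivity))

theorem norm_fderiv_bareBones_le_two (ha1 : 0 < a1) (ha2 : 0 < a2) (hγ0 : 0 ≤ γ)
    (hγ1 : γ ≤ 1) {x : ℝ × ℝ} (hx1 : 0 ≤ x.1) (hx2 : 0 ≤ x.2) :
    ‖fderiv ℝ (bareBones a1 a2 γ) x‖ ≤ 2 := by
  rw [(hasFDerivAt_bareBones ha1 ha2 hγ0 hx1 hx2).fderiv, opNorm_prod, Prod.norm_def]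
  refine max_le ?_ ?_
  · exact (norm_smul_add_smul_le (norm_fst_le ℝ ℝ ℝ) (norm_snd_le ℝ ℝ ℝ) _ _).trans
      (bareBonesCoord_partials_abs_add_le_two ha1 hx1 hx2 hγ0 hγ1)
  · exact (norm_smul_add_smul_le (norm_snd_le ℝ ℝ ℝ) (norm_fst_le ℝ ℝ ℝ) _ _).trans
      (bareBonesCoord_partials_abs_add_le_two ha2 hx2 hx1 hγ0 hγ1)

theorem lipschitzOnWith_bareBones (ha1 : 0 < a1) (ha2 : 0 < a2) (hγ0 : 0 ≤ γ)
    (hγ1 : γ ≤ 1) :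
    LipschitzOnWith 2 (bareBones a1 a2 γ) {p : ℝ × ℝ | 0 ≤ p.1 ∧ 0 ≤ p.2} :=
  (convex_Ici (0 : ℝ × ℝ)).lipschitzOnWith_of_nnnorm_fderiv_le
    (fun _ hx => (hasFDerivAt_bareBones ha1 ha2 hγ0 hx.1 hx.2).differentiableAt)
    (fun _ hx => norm_fderiv_bareBones_le_two ha1 ha2 hγ0 hγ1 hx.1 hx.2)

end bareBones

/-- The Jacobian of the bare bones map has ℓ∞ operator norm at most `2` on the
nonnegative quadrant; consequently `f` is `2`-Lipschitz there (in the sup norm,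
which is the norm of `ℝ × ℝ`). -/
theorem jacobian_bound_and_lipschitz
    (a1 a2 γ : ℝ) (ha1 : 0 < a1) (ha2 : 0 < a2) (hγ0 : 0 < γ) (hγ1 : γ < 1)
    (f : ℝ × ℝ → ℝ × ℝ)
    (hf : ∀ x : ℝ × ℝ,
      f x = (2 * x.1 * a1 / (a1 + x.1 + γ * x.2),
             2 * x.2 * a2 / (a2 + γ * x.1 + x.2))) :
    (∀ x : ℝ × ℝ, 0 ≤ x.1 → 0 ≤ x.2 → ‖fderiv ℝ f x‖ ≤ 2) ∧
    LipschitzOnWith 2 f {p : ℝ × ℝ | 0 ≤ p.1 ∧ 0 ≤ p.2} := by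
  obtain rfl : f = bareBones a1 a2 γ := funext fun x => by
    rw [hf, bareBones, bareBonesCoord, bareBonesCoord, add_right_comm a2]
  exact ⟨fun x => norm_fderiv_bareBones_le_two ha1 ha2 hγ0.le hγ1.le,
    lipschitzOnWith_bareBones ha1 ha2 hγ0.le hγ1.le⟩
end
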